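/- arXiv:1609.04852 — 10 statements merged into one kernel-verified Lean document; each statement's English description precedes it below -/
import Mathlib

section
/- Let b ≥ 2 be an integer and let X be a positive random variable (P(X > 0) = 1) whose law has measurable density f : ℝ → [0,∞) with respect to Lebesgue measure. Then for every u ∈ [0,1), P(⟨log_b X⟩ ≤ u) = ∫_0^u ( ∑_{k∈ℤ} (ln b) · b^{k+ξ} · f(b^{k+ξ}) ) dξ; that is, the function g(ξ) := ∑_{k∈ℤ} (ln b) b^{k+ξ} f(b^{k+ξ}) on [0,1) is a probability density of ⟨log_b X⟩. -/
open MeasureTheory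

/-- If a positive random variable `X` has density `f`, then
`g(ξ) := ∑_{k ∈ ℤ} (ln b) b^{k+ξ} f(b^{k+ξ})` is a density of `⟨log_b X⟩`
on `[0,1)`, in the sense that `P(⟨log_b X⟩ ≤ u) = ∫_0^u g(ξ) dξ`. -/
theorem cdf_fract_log_eq_integral_generator_sum
    {Ω : Type*} [MeasurableSpace Ω] (ℙ : Measure Ω) [IsProbabilityMeasure ℙ]
    (b : ℕ) (hb : 2 ≤ b) (X : Ω → ℝ) (hX : Measurable X)
    (hpos : ℙ {ω | 0 < X ω} = 1)
    (f : ℝ → ℝ) (hf : Measurable f) (hf0 : ∀ x, 0 ≤ f x)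
    (hlaw : Measure.map X ℙ = volume.withDensity (fun x => ENNReal.ofReal (f x))) :
    ∀ u ∈ Set.Ico (0 : ℝ) 1,
      ℙ {ω | Int.fract (Real.logb b (X ω)) ≤ u}
        = ENNReal.ofReal
            (∫ ξ in (0 : ℝ)..u,
              ∑' k : ℤ, Real.log b * (b : ℝ) ^ ((k : ℝ) + ξ) * f ((b : ℝ) ^ ((k : ℝ) + ξ))) := by
  rintro u ⟨hu0, hu1⟩
  set B : ℝ := (b : ℝ) with hBdef
  have hB1 : (1 : ℝ) < B := by
    have : (2 : ℝ) ≤ B := by rw [hBdef]; exact_mod_cast hb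
    linarith
  have hB0 : (0 : ℝ) < B := by linarith
  have hBne : B ≠ 1 := ne_of_gt hB1
  have hlogB : 0 < Real.log B := Real.log_pos hB1
  set μ := volume.withDensity (fun x => ENNReal.ofReal (f x)) with hμ
  -- the set on the real line
  set S : Set ℝ := {x | 0 < x ∧ Int.fract (Real.logb B x) ≤ u} with hS
  have mS : MeasurableSet S := by
    apply MeasurableSet.inter (measurableSet_Ioi (a := (0:ℝ)))
    exact measurableSet_le ((Real.measurable_log.div_const _).fract) measurable_const
  -- Step A : LHS = μ S
  have hA : ℙ {ω | Int.fract (Real.logb B (X ω)) ≤ u} = μ S := by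
    have hmpos : MeasurableSet {ω | 0 < X ω} := hX measurableSet_Ioi
    have hc : ℙ ({ω | 0 < X ω})ᶜ = 0 := by
      rw [measure_compl hmpos (measure_ne_top _ _), hpos, measure_univ, tsub_self]
    rw [← measure_inter_conull hc]
    have hset : {ω | Int.fract (Real.logb B (X ω)) ≤ u} ∩ {ω | 0 < X ω} = X ⁻¹' S := by
      ext ω; simp only [hS, Set.mem_inter_iff, Set.mem_setOf_eq, Set.mem_preimage, and_comm]
    rw [hset, ← Measure.map_apply hX mS, hlaw]
  -- positivity of terms
  have hterm0 : ∀ (k : ℤ) (ξ : ℝ), 0 ≤ Real.log B * B ^ ((k : ℝ) + ξ) * f (B ^ ((k : ℝ) + ξ)) :=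
    fun k ξ => mul_nonneg (mul_nonneg hlogB.le (Real.rpow_pos_of_pos hB0 _).le) (hf0 _)
  -- Step B : S = ⋃ Icc
  have hBset : S = ⋃ k : ℤ, Set.Icc (B ^ (k : ℝ)) (B ^ ((k : ℝ) + u)) := by
    ext x
    simp only [hS, Set.mem_setOf_eq, Set.mem_iUnion, Set.mem_Icc]
    constructor
    · rintro ⟨hx, hfr⟩
      refine ⟨⌊Real.logb B x⌋, ?_, ?_⟩
      · calc B ^ ((⌊Real.logb B x⌋ : ℝ))
            ≤ B ^ Real.logb B x := (Real.rpow_le_rpow_left_iff hB1).2 (Int.floor_le _)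
          _ = x := Real.rpow_logb hB0 hBne hx
      · have h2 : Real.logb B x ≤ (⌊Real.logb B x⌋ : ℝ) + u := by
          have : Int.fract (Real.logb B x) = Real.logb B x - ⌊Real.logb B x⌋ := rfl
          linarith [hfr, this ▸ hfr]
        calc x = B ^ Real.logb B x := (Real.rpow_logb hB0 hBne hx).symm
          _ ≤ B ^ ((⌊Real.logb B x⌋ : ℝ) + u) := (Real.rpow_le_rpow_left_iff hB1).2 h2
    · rintro ⟨k, hk1, hk2⟩
      have hx : 0 < x := lt_of_lt_of_le (Real.rpow_pos_of_pos hB0 _) hk1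
      have hxeq : B ^ Real.logb B x = x := Real.rpow_logb hB0 hBne hx
      have h1 : (k : ℝ) ≤ Real.logb B x := by
        rw [← Real.rpow_le_rpow_left_iff (x := B) hB1, hxeq]; exact hk1
      have h2 : Real.logb B x ≤ (k : ℝ) + u := by
        rw [← Real.rpow_le_rpow_left_iff (x := B) hB1, hxeq]; exact hk2
      have hfl : ⌊Real.logb B x⌋ = k := by
        apply Int.floor_eq_iff.2
        exact ⟨h1, by linarith⟩
      refine ⟨hx, ?_⟩
      have : Int.fract (Real.logb B x) = Real.logb B x - k := by
        rw [Int.fract, hfl]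
      linarith [this]
  -- Step C : μ S = ∑' μ (Ioc ...)
  have hC : μ S = ∑' k : ℤ, μ (Set.Ioc (B ^ (k : ℝ)) (B ^ ((k : ℝ) + u))) := by
    have hsing : ∀ a : ℝ, μ ({a} : Set ℝ) = 0 := fun a =>
      (withDensity_absolutelyContinuous volume _) (measure_singleton a)
    have hIccIoc : ∀ a c : ℝ, μ (Set.Icc a c) = μ (Set.Ioc a c) := by
      intro a c
      apply le_antisymm
      · calc μ (Set.Icc a c) ≤ μ ({a} ∪ Set.Ioc a c) := by
              apply measure_mono
              intro x hx
              rcases eq_or_lt_of_le hx.1 with h | h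
              · exact Or.inl h.symm
              · exact Or.inr ⟨h, hx.2⟩
          _ ≤ μ ({a} : Set ℝ) + μ (Set.Ioc a c) := measure_union_le _ _
          _ = μ (Set.Ioc a c) := by rw [hsing, zero_add]
      · exact measure_mono Set.Ioc_subset_Icc_self
    have hdisj : Pairwise (Function.onFun Disjoint
        fun k : ℤ => Set.Icc (B ^ (k : ℝ)) (B ^ ((k : ℝ) + u))) := by
      have key : ∀ j k : ℤ, j < k → Disjoint (Set.Icc (B ^ (j : ℝ)) (B ^ ((j : ℝ) + u)))
          (Set.Icc (B ^ (k : ℝ)) (B ^ ((k : ℝ) + u))) := by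
        intro j k hjk
        apply Set.disjoint_left.2
        rintro x ⟨_, hx2⟩ ⟨hx3, _⟩
        have : B ^ ((j : ℝ) + u) < B ^ (k : ℝ) := by
          apply (Real.rpow_lt_rpow_left_iff hB1).2
          have : (j : ℝ) + 1 ≤ (k : ℝ) := by exact_mod_cast hjk
          linarith
        linarith
      intro j k hjk
      rcases lt_or_gt_of_ne hjk with h | h
      · exact key j k h
      · exact (key k j h).symm
    rw [hBset, measure_iUnion hdisj fun k => measurableSet_Icc]
    exact tsum_congr fun k => hIccIoc _ _
  -- Step D : change of variables for each k
  have hD : ∀ k : ℤ, μ (Set.Ioc (B ^ (k : ℝ)) (B ^ ((k : ℝ) + u)))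
      = ∫⁻ ξ in Set.Ioc (0:ℝ) u,
          ENNReal.ofReal (Real.log B * B ^ ((k : ℝ) + ξ) * f (B ^ ((k : ℝ) + ξ))) := by
    intro k
    set φ : ℝ → ℝ := fun ξ => B ^ ((k : ℝ) + ξ) with hφ
    have hderiv : ∀ ξ ∈ Set.Ioc (0:ℝ) u, HasFDerivWithinAt φ
        ((1 : ℝ →L[ℝ] ℝ).smulRight (Real.log B * B ^ ((k : ℝ) + ξ))) (Set.Ioc (0:ℝ) u) ξ := by
      intro ξ _
      have h1 : HasDerivAt (fun t : ℝ => B ^ t) (B ^ ((k : ℝ) + ξ) * Real.log B) ((k : ℝ) + ξ) :=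
        (Real.hasStrictDerivAt_const_rpow hB0 _).hasDerivAt
      have h2 : HasDerivAt (fun t : ℝ => (k : ℝ) + t) 1 ξ := (hasDerivAt_id ξ).const_add _
      have h3 : HasDerivAt φ (B ^ ((k : ℝ) + ξ) * Real.log B * 1) ξ := h1.comp ξ h2
      have h4 : HasDerivAt φ (Real.log B * B ^ ((k : ℝ) + ξ)) ξ := by
        convert h3 using 1; ring
      exact h4.hasFDerivAt.hasFDerivWithinAt
    have hinj : Set.InjOn φ (Set.Ioc (0:ℝ) u) := by
      intro x _ y _ hxy
      have : (k : ℝ) + x = (k : ℝ) + y := by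
        have h1 := Real.logb_rpow (b := B) hB0 hBne (x := (k : ℝ) + x)
        have h2 := Real.logb_rpow (b := B) hB0 hBne (x := (k : ℝ) + y)
        rw [← h1, ← h2, hφ] at *
        simp only [hxy]
      linarith
    have himg : φ '' Set.Ioc (0:ℝ) u = Set.Ioc (B ^ (k : ℝ)) (B ^ ((k : ℝ) + u)) := by
      ext y
      constructor
      · rintro ⟨ξ, ⟨hξ0, hξu⟩, rfl⟩
        exact ⟨(Real.rpow_lt_rpow_left_iff hB1).2 (by linarith),
          (Real.rpow_le_rpow_left_iff hB1).2 (by linarith)⟩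
      · rintro ⟨h1, h2⟩
        have hy : 0 < y := lt_trans (Real.rpow_pos_of_pos hB0 _) h1
        have hyeq : B ^ Real.logb B y = y := Real.rpow_logb hB0 hBne hy
        refine ⟨Real.logb B y - (k : ℝ), ⟨?_, ?_⟩, ?_⟩
        · have : (k : ℝ) < Real.logb B y := by
            rw [← Real.rpow_lt_rpow_left_iff (x := B) hB1, hyeq]; exact h1
          linarith
        · have : Real.logb B y ≤ (k : ℝ) + u := by
            rw [← Real.rpow_le_rpow_left_iff (x := B) hB1, hyeq]; exact h2
          linarith
        · show B ^ ((k : ℝ) + (Real.logb B y - (k : ℝ))) = y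
          rw [add_sub_cancel]; exact hyeq
    calc μ (Set.Ioc (B ^ (k : ℝ)) (B ^ ((k : ℝ) + u)))
        = ∫⁻ x in Set.Ioc (B ^ (k : ℝ)) (B ^ ((k : ℝ) + u)), ENNReal.ofReal (f x) :=
          withDensity_apply _ measurableSet_Ioc
      _ = ∫⁻ x in φ '' Set.Ioc (0:ℝ) u, ENNReal.ofReal (f x) := by rw [himg]
      _ = ∫⁻ ξ in Set.Ioc (0:ℝ) u,
            ENNReal.ofReal |((1 : ℝ →L[ℝ] ℝ).smulRight (Real.log B * B ^ ((k : ℝ) + ξ))).det|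
              * ENNReal.ofReal (f (φ ξ)) :=
          lintegral_image_eq_lintegral_abs_det_fderiv_mul volume measurableSet_Ioc hderiv hinj _
      _ = ∫⁻ ξ in Set.Ioc (0:ℝ) u,
            ENNReal.ofReal (Real.log B * B ^ ((k : ℝ) + ξ) * f (B ^ ((k : ℝ) + ξ))) := by
          apply lintegral_congr
          intro ξ
          rw [ContinuousLinearMap.smulRight_one_eq_toSpanSingleton, ContinuousLinearMap.det_toSpanSingleton,
            abs_of_pos (mul_pos hlogB (Real.rpow_pos_of_pos hB0 _)),
            ← ENNReal.ofReal_mul (mul_pos hlogB (Real.rpow_pos_of_pos hB0 _)).le]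
  -- measurability of terms
  have hmterm : ∀ k : ℤ, Measurable fun ξ : ℝ =>
      ENNReal.ofReal (Real.log B * B ^ ((k : ℝ) + ξ) * f (B ^ ((k : ℝ) + ξ))) := by
    intro k
    have hφ : Measurable fun ξ : ℝ => B ^ ((k : ℝ) + ξ) :=
      (Continuous.rpow continuous_const (continuous_const.add continuous_id)
        (fun x => Or.inl hB0.ne')).measurable
    exact ENNReal.measurable_ofReal.comp ((measurable_const.mul hφ).mul (hf.comp hφ))
  set G : ℝ → ENNReal := fun ξ =>
    ∑' k : ℤ, ENNReal.ofReal (Real.log B * B ^ ((k : ℝ) + ξ) * f (B ^ ((k : ℝ) + ξ))) with hG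
  have hmG : Measurable G := Measurable.ennreal_tsum hmterm
  -- Step E : sum of lintegrals = lintegral of sum
  have hE : ℙ {ω | Int.fract (Real.logb B (X ω)) ≤ u} = ∫⁻ ξ in Set.Ioc (0:ℝ) u, G ξ := by
    rw [hA, hC]
    simp_rw [hD]
    rw [← lintegral_tsum (fun k => (hmterm k).aemeasurable)]
  have hfin : (∫⁻ ξ in Set.Ioc (0:ℝ) u, G ξ) ≠ ⊤ := by
    rw [← hE]; exact (measure_lt_top _ _).ne
  -- Step F : convert to Bochner integral
  rw [hE]
  have htoReal : ∀ ξ : ℝ,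
      (∑' k : ℤ, Real.log B * B ^ ((k : ℝ) + ξ) * f (B ^ ((k : ℝ) + ξ))) = (G ξ).toReal := by
    intro ξ
    rw [hG, ENNReal.tsum_toReal_eq (fun k => ENNReal.ofReal_ne_top)]
    exact tsum_congr fun k => (ENNReal.toReal_ofReal (hterm0 k ξ)).symm
  rw [intervalIntegral.integral_of_le hu0]
  rw [integral_congr_ae (Filter.EventuallyEq.of_eq (funext htoReal))]
  rw [integral_toReal (hmG.aemeasurable) (ae_lt_top hmG hfin)]
  rw [ENNReal.ofReal_toReal hfin]
end

section
/- Let b ≥ 2 be an integer and let X be a positive random variable (P(X > 0) = 1) whose law has measurable density f : ℝ → [0,∞) with respect to Lebesgue measure. If X is base-b Benford, then for almost every u ∈ [0,1) one has ∑_{k∈ℤ} (ln b) · b^{k+u} · f(b^{k+u}) = 1. -/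
open MeasureTheory

/-- If a positive random variable `X` with density `f` is base-`b` Benford,
then for almost every `u ∈ [0,1)`,
`∑_{k ∈ ℤ} (ln b) b^{k+u} f(b^{k+u}) = 1` (the induced generator is uniform). -/
theorem benford_generator_uniform_ae
    {Ω : Type*} [MeasurableSpace Ω] (ℙ : Measure Ω) [IsProbabilityMeasure ℙ]
    (b : ℕ) (hb : 2 ≤ b) (X : Ω → ℝ) (hX : Measurable X)
    (hpos : ℙ {ω | 0 < X ω} = 1)
    (f : ℝ → ℝ) (hf : Measurable f) (hf0 : ∀ x, 0 ≤ f x)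
    (hlaw : Measure.map X ℙ = volume.withDensity (fun x => ENNReal.ofReal (f x)))
    (hben : Measure.map (fun ω => Int.fract (Real.logb b (X ω))) ℙ
      = volume.restrict (Set.Ico (0 : ℝ) 1)) :
    ∀ᵐ u ∂(volume.restrict (Set.Ico (0 : ℝ) 1)),
      ∑' k : ℤ, Real.log b * (b : ℝ) ^ ((k : ℝ) + u) * f ((b : ℝ) ^ ((k : ℝ) + u)) = 1 := by
  have hb1 : (1 : ℝ) < (b : ℝ) := by exact_mod_cast (by omega : 1 < b)
  have hb0 : (0 : ℝ) < (b : ℝ) := lt_trans one_pos hb1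
  have hbne1 : (b : ℝ) ≠ 1 := ne_of_gt hb1
  have hlog : 0 < Real.log b := Real.log_pos hb1
  set T : ℝ → ℝ := fun x => Int.fract (Real.logb b x) with hTdef
  have hlogbmeas : Measurable fun x : ℝ => Real.logb b x := by
    simpa [Real.logb, div_eq_mul_inv] using Real.measurable_log.div_const (Real.log b)
  have hTmeas : Measurable T := hlogbmeas.fract
  set φ : ℤ → ℝ → ℝ := fun k u => (b : ℝ) ^ ((k : ℝ) + u) with hφdef
  have hφpos : ∀ k u, 0 < φ k u := fun k u => Real.rpow_pos_of_pos hb0 _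
  have hder : ∀ k u, HasDerivAt (φ k) (Real.log b * φ k u) u := by
    intro k u
    have h1 : HasDerivAt (fun u : ℝ => Real.log b * ((k : ℝ) + u)) (Real.log b) u := by
      simpa using ((hasDerivAt_id u).const_add ((k : ℝ))).const_mul (Real.log b)
    have h2 := (Real.hasDerivAt_exp (Real.log b * ((k : ℝ) + u))).comp u h1
    have heq : Real.exp ∘ (fun u : ℝ => Real.log b * ((k : ℝ) + u)) = φ k := by
      funext v
      show Real.exp (Real.log b * ((k : ℝ) + v)) = (b : ℝ) ^ ((k : ℝ) + v)
      rw [Real.rpow_def_of_pos hb0]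
    rw [heq] at h2
    have hval : Real.exp (Real.log b * ((k : ℝ) + u)) = φ k u := by
      show Real.exp (Real.log b * ((k : ℝ) + u)) = (b : ℝ) ^ ((k : ℝ) + u)
      rw [Real.rpow_def_of_pos hb0]
    rw [hval] at h2
    simpa [mul_comm] using h2
  have hmono : ∀ k, StrictMono (φ k) := by
    intro k u v huv
    exact (Real.rpow_lt_rpow_left_iff hb1).mpr (by linarith)
  have hinj : ∀ k, Function.Injective (φ k) := fun k => (hmono k).injective
  have hcont : ∀ k, Continuous (φ k) := by
    intro k
    exact Differentiable.continuous (fun u => (hder k u).differentiableAt)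
  have hemb : ∀ k, MeasurableEmbedding (φ k) := fun k =>
    (hcont k).measurableEmbedding (hinj k)
  set μ : Measure ℝ := volume.withDensity (fun x => ENNReal.ofReal (f x)) with hμdef
  -- the law of X gives no mass to (-∞, 0]
  have hμIic : μ (Set.Iic 0) = 0 := by
    rw [← hlaw, Measure.map_apply hX measurableSet_Iic]
    have hset : X ⁻¹' Set.Iic 0 = {ω | 0 < X ω}ᶜ := by
      ext ω; simp [not_lt]
    rw [hset, measure_compl (measurableSet_lt measurable_const hX) (measure_ne_top ℙ _), hpos]
    simp
  have hmapT : Measure.map T μ = volume.restrict (Set.Ico (0 : ℝ) 1) := by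
    rw [← hlaw, Measure.map_map hTmeas hX]
    exact hben
  -- the ENNReal-valued candidate density
  set g : ℝ → ENNReal := fun u =>
    ∑' k : ℤ, ENNReal.ofReal (Real.log b * φ k u * f (φ k u)) with hgdef
  have htermmeas : ∀ k : ℤ,
      Measurable fun u => ENNReal.ofReal (Real.log b * φ k u * f (φ k u)) := by
    intro k
    exact ENNReal.measurable_ofReal.comp
      (((measurable_const.mul (hcont k).measurable)).mul (hf.comp (hcont k).measurable))
  have hgmeas : Measurable g := Measurable.ennreal_tsum htermmeas
  -- main computation: for measurable S ⊆ [0,1), ∫⁻_S g = volume S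
  have key : ∀ S : Set ℝ, MeasurableSet S → S ⊆ Set.Ico (0 : ℝ) 1 →
      ∫⁻ u in S, g u = volume S := by
    intro S hS hSsub
    -- decomposition of the preimage
    have hpre : T ⁻¹' S ∩ Set.Ioi 0 = ⋃ k : ℤ, φ k '' S := by
      ext x
      constructor
      · rintro ⟨hxS, hx0⟩
        refine Set.mem_iUnion.2 ⟨⌊Real.logb b x⌋, Int.fract (Real.logb b x), hxS, ?_⟩
        show (b : ℝ) ^ ((⌊Real.logb b x⌋ : ℝ) + Int.fract (Real.logb b x)) = x
        rw [Int.floor_add_fract]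
        exact Real.rpow_logb hb0 hbne1 hx0
      · intro hx
        obtain ⟨k, u, huS, rfl⟩ := Set.mem_iUnion.1 hx
        have hu : u ∈ Set.Ico (0 : ℝ) 1 := hSsub huS
        constructor
        · show T (φ k u) ∈ S
          have : T (φ k u) = u := by
            show Int.fract (Real.logb b ((b : ℝ) ^ ((k : ℝ) + u))) = u
            rw [Real.logb_rpow hb0 hbne1, Int.fract_intCast_add,
              Int.fract_eq_self.2 ⟨hu.1, hu.2⟩]
          rw [this]; exact huS
        · exact hφpos k u
    -- pairwise disjointness of the decades
    have hdisj : Pairwise (Function.onFun Disjoint fun k : ℤ => φ k '' S) := by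
      intro k k' hkk'
      rw [Function.onFun, Set.disjoint_left]
      rintro x ⟨u, huS, rfl⟩ ⟨v, hvS, hx⟩
      have hu : u ∈ Set.Ico (0 : ℝ) 1 := hSsub huS
      have hv : v ∈ Set.Ico (0 : ℝ) 1 := hSsub hvS
      have h1 : (k' : ℝ) + v = (k : ℝ) + u := by
        have := congrArg (Real.logb b) hx
        rwa [hφdef, Real.logb_rpow hb0 hbne1, Real.logb_rpow hb0 hbne1] at this
      have h2 : k' + ⌊v⌋ = k + ⌊u⌋ := by
        have := congrArg Int.floor h1
        rwa [Int.floor_intCast_add, Int.floor_intCast_add] at this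
      have hfu : ⌊u⌋ = 0 := Int.floor_eq_zero_iff.2 ⟨hu.1, hu.2⟩
      have hfv : ⌊v⌋ = 0 := Int.floor_eq_zero_iff.2 ⟨hv.1, hv.2⟩
      rw [hfu, hfv, add_zero, add_zero] at h2
      exact hkk' h2.symm
    have himmeas : ∀ k : ℤ, MeasurableSet (φ k '' S) := fun k =>
      (hemb k).measurableSet_image.2 hS
    -- change of variables on each decade
    have hdecade : ∀ k : ℤ,
        μ (φ k '' S) = ∫⁻ u in S, ENNReal.ofReal (Real.log b * φ k u * f (φ k u)) := by
      intro k
      rw [hμdef, withDensity_apply _ (himmeas k)]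
      have := lintegral_image_eq_lintegral_abs_det_fderiv_mul volume hS
        (f' := fun u => ContinuousLinearMap.smulRight (1 : ℝ →L[ℝ] ℝ) (Real.log b * φ k u))
        (fun u _ => ((hder k u).hasDerivWithinAt).hasFDerivWithinAt)
        ((hinj k).injOn) (fun x => ENNReal.ofReal (f x))
      rw [this]
      refine setLIntegral_congr_fun hS (fun u _ => ?_)
      rw [ContinuousLinearMap.smulRight_one_eq_toSpanSingleton, ContinuousLinearMap.det_toSpanSingleton,
        abs_of_pos (mul_pos hlog (hφpos k u)),
        ← ENNReal.ofReal_mul (mul_pos hlog (hφpos k u)).le]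
    -- put everything together
    have hTS : MeasurableSet (T ⁻¹' S) := hTmeas hS
    have hsplit : μ (T ⁻¹' S) = μ (⋃ k : ℤ, φ k '' S) := by
      have hnull : μ (T ⁻¹' S \ Set.Ioi 0) = 0 := by
        refine measure_mono_null ?_ hμIic
        intro x hx
        simpa [Set.mem_Iic, not_lt] using hx.2
      rw [← measure_inter_add_diff (T ⁻¹' S) measurableSet_Ioi, hnull, add_zero, hpre]
    have hsum : μ (⋃ k : ℤ, φ k '' S) = ∑' k : ℤ, μ (φ k '' S) :=
      measure_iUnion hdisj himmeas
    have hμTS : μ (T ⁻¹' S) = volume S := by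
      have h1 : Measure.map T μ S = volume S := by
        rw [hmapT, Measure.restrict_apply hS, Set.inter_eq_self_of_subset_left hSsub]
      rw [← h1, Measure.map_apply hTmeas hS]
    calc ∫⁻ u in S, g u
        = ∫⁻ u in S, ∑' k : ℤ, ENNReal.ofReal (Real.log b * φ k u * f (φ k u)) := rfl
      _ = ∑' k : ℤ, ∫⁻ u in S, ENNReal.ofReal (Real.log b * φ k u * f (φ k u)) :=
          lintegral_tsum fun k => (htermmeas k).aemeasurable
      _ = ∑' k : ℤ, μ (φ k '' S) := by
          refine tsum_congr fun k => ?_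
          rw [hdecade k]
      _ = μ (T ⁻¹' S) := by rw [hsplit, hsum]
      _ = volume S := hμTS
  -- uniqueness of densities on the finite measure space [0,1)
  have hae : g =ᵐ[volume.restrict (Set.Ico (0 : ℝ) 1)] fun _ => 1 := by
    refine ae_eq_of_forall_setLIntegral_eq_of_sigmaFinite hgmeas measurable_const
      fun s hs _ => ?_
    have hS : MeasurableSet (s ∩ Set.Ico (0 : ℝ) 1) := hs.inter measurableSet_Ico
    rw [Measure.restrict_restrict hs, key _ hS Set.inter_subset_right,
      setLIntegral_one]
  -- pass from the ENNReal identity to the real tsum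
  filter_upwards [hae] with u hu
  have hu' : (∑' k : ℤ, ENNReal.ofReal (Real.log b * φ k u * f (φ k u))) = 1 := hu
  set a : ℤ → ℝ := fun k => Real.log b * φ k u * f (φ k u) with hadef
  have ha0 : ∀ k, 0 ≤ a k := fun k =>
    mul_nonneg (mul_nonneg hlog.le (hφpos k u).le) (hf0 _)
  have hsummable : Summable a := by
    have hne : (∑' k : ℤ, ENNReal.ofReal (a k)) ≠ ⊤ := by
      rw [hu']; exact ENNReal.one_ne_top
    have := ENNReal.summable_toReal hne
    simpa [ENNReal.toReal_ofReal (ha0 _)] using this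
  have hofreal : ENNReal.ofReal (∑' k, a k) = 1 := by
    rw [ENNReal.ofReal_tsum_of_nonneg ha0 hsummable]; exact hu'
  have h2 : (ENNReal.ofReal (∑' k, a k)).toReal = 1 := by rw [hofreal]; simp
  rwa [ENNReal.toReal_ofReal (tsum_nonneg ha0)] at h2
end

section
/- Let b ≥ 2 be an integer and let (g_k)_{k∈ℤ} be a uniform generator: measurable functions g_k : [0,1) → [0,∞) with ∑_{k∈ℤ} g_k(u) = 1 for every u ∈ [0,1). Define f : ℝ → [0,∞) by f(x) := g_{⌊log_b x⌋}(⟨log_b x⟩) / (x · ln b) for x > 0 and f(x) := 0 for x ≤ 0. Then ∫_ℝ f dx = 1, and any random variable X whose law has density f with respect to Lebesgue measure satisfies P(X > 0) = 1 and is base-b Benford. -/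
/-!
Substituting `x = b ^ y` turns `f x dx` into `g ⌊y⌋ ⟨y⟩ dy` and `⟨log_b x⟩` into `⟨y⟩`.
Cutting the `y`-line into the intervals `[k, k + 1)` and translating each of them back to
`[0, 1)`, the law of `⟨log_b X⟩` acquires the density `∑ₖ g k u = 1` on `[0, 1)`.
-/

open MeasureTheory Set
open scoped ENNReal

structure IsUniformGenerator (g : ℤ → ℝ → ℝ) : Prop where
  measurable : ∀ k, Measurable (g k)
  nonneg : ∀ k, ∀ u ∈ Ico (0 : ℝ) 1, 0 ≤ g k u
  tsum_eq_one : ∀ u ∈ Ico (0 : ℝ) 1, ∑' k, g k u = 1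

noncomputable def generatorDensity (b : ℝ) (g : ℤ → ℝ → ℝ) (x : ℝ) : ℝ :=
  if 0 < x then g ⌊Real.logb b x⌋ (Int.fract (Real.logb b x)) / (x * Real.log b) else 0

lemma lintegral_comp_floor_fract (Ψ : ℤ → ℝ → ℝ≥0∞) :
    ∫⁻ y, Ψ ⌊y⌋ (Int.fract y) = ∑' k : ℤ, ∫⁻ u in Ico (0 : ℝ) 1, Ψ k u := by
  rw [← setLIntegral_univ, ← iUnion_Ico_intCast ℝ,
    lintegral_iUnion (fun _ => measurableSet_Ico) (pairwise_disjoint_Ico_intCast ℝ)]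
  refine tsum_congr fun k => ?_
  have hfloor : ∀ y ∈ Ico (k : ℝ) (k + 1), Ψ ⌊y⌋ (Int.fract y) = Ψ k (y - k) := by
    intro y hy
    rw [Int.fract, Int.floor_eq_iff.mpr ⟨hy.1, hy.2⟩]
  rw [setLIntegral_congr_fun measurableSet_Ico hfloor,
    (measurePreserving_sub_right volume (k : ℝ)).setLIntegral_comp_emb
      (measurableEmbedding_subRight _), image_sub_const_Ico, sub_self, add_sub_cancel_left]

lemma lintegral_Ioi_eq_lintegral_rpow {b : ℝ} (hb : 1 < b) (G : ℝ → ℝ≥0∞) :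
    ∫⁻ x in Ioi 0, G x = ∫⁻ y : ℝ, ENNReal.ofReal (b ^ y * Real.log b) * G (b ^ y) := by
  have hb0 : 0 < b := zero_lt_one.trans hb
  have himage : (b ^ · : ℝ → ℝ) '' univ = Ioi 0 := by
    refine (image_subset_iff.mpr fun y _ => Real.rpow_pos_of_pos hb0 y).antisymm fun x hx => ?_
    exact ⟨Real.logb b x, mem_univ _, Real.rpow_logb hb0 hb.ne' hx⟩
  rw [← himage, lintegral_image_eq_lintegral_abs_deriv_mul MeasurableSet.univ
    (fun y _ => (Real.hasStrictDerivAt_const_rpow hb0 y).hasDerivAt.hasDerivWithinAt)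
    (Real.strictMono_rpow_of_base_gt_one hb).injective.injOn, Measure.restrict_univ]
  refine lintegral_congr fun y => ?_
  rw [abs_of_pos (mul_pos (Real.rpow_pos_of_pos hb0 y) (Real.log_pos hb))]

lemma generatorDensity_of_nonpos (b : ℝ) (g : ℤ → ℝ → ℝ) {x : ℝ} (hx : x ≤ 0) :
    generatorDensity b g x = 0 :=
  if_neg hx.not_gt

lemma generatorDensity_rpow {b : ℝ} (hb : 1 < b) (g : ℤ → ℝ → ℝ) (y : ℝ) :
    generatorDensity b g (b ^ y) = g ⌊y⌋ (Int.fract y) / (b ^ y * Real.log b) := by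
  have hb0 : 0 < b := zero_lt_one.trans hb
  rw [generatorDensity, if_pos (Real.rpow_pos_of_pos hb0 y), Real.logb_rpow hb0 hb.ne']

lemma measurable_generatorDensity {g : ℤ → ℝ → ℝ} (hg : ∀ k, Measurable (g k)) (b : ℝ) :
    Measurable (generatorDensity b g) := by
  have hfloor_fract : Measurable fun y : ℝ => g ⌊y⌋ (Int.fract y) :=
    (measurable_from_prod_countable_left (f := fun p : ℝ × ℤ => g p.2 p.1) hg).comp
      (measurable_fract.prodMk Int.measurable_floor)
  refine Measurable.ite measurableSet_Ioi ?_ measurable_const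
  exact (hfloor_fract.comp (Real.measurable_log.div_const _)).div (by fun_prop)

lemma measurable_fract_logb (b : ℝ) : Measurable fun x => Int.fract (Real.logb b x) :=
  (Real.measurable_log.div_const _).fract

namespace IsUniformGenerator

variable {g : ℤ → ℝ → ℝ} {b : ℝ}

lemma tsum_ofReal_eq_one (hg : IsUniformGenerator g) {u : ℝ} (hu : u ∈ Ico (0 : ℝ) 1) :
    ∑' k, ENNReal.ofReal (g k u) = 1 := by
  have hsum : Summable (g · u) := by
    by_contra h
    simpa [tsum_eq_zero_of_not_summable h] using hg.tsum_eq_one u hu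
  rw [← ENNReal.ofReal_tsum_of_nonneg (hg.nonneg · u hu) hsum, hg.tsum_eq_one u hu,
    ENNReal.ofReal_one]

lemma generatorDensity_nonneg (hg : IsUniformGenerator g) (hb : 1 ≤ b) (x : ℝ) :
    0 ≤ generatorDensity b g x := by
  unfold generatorDensity
  split_ifs with hx
  · exact div_nonneg (hg.nonneg _ _ ⟨Int.fract_nonneg _, Int.fract_lt_one _⟩)
      (mul_nonneg hx.le (Real.log_nonneg hb))
  · exact le_rfl

lemma setLIntegral_Ioi_generatorDensity_mul (hg : IsUniformGenerator g) (hb : 1 < b)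
    {φ : ℝ → ℝ≥0∞} (hφ : Measurable φ) :
    ∫⁻ x in Ioi 0, ENNReal.ofReal (generatorDensity b g x) * φ (Int.fract (Real.logb b x))
      = ∫⁻ u in Ico (0 : ℝ) 1, φ u := by
  have hb0 : 0 < b := zero_lt_one.trans hb
  have hjacobian : ∀ y : ℝ, ENNReal.ofReal (b ^ y * Real.log b)
      * ENNReal.ofReal (generatorDensity b g (b ^ y)) = ENNReal.ofReal (g ⌊y⌋ (Int.fract y)) := by
    intro y
    have hpos : 0 < b ^ y * Real.log b := mul_pos (Real.rpow_pos_of_pos hb0 y) (Real.log_pos hb)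
    rw [← ENNReal.ofReal_mul hpos.le, generatorDensity_rpow hb, mul_div_cancel₀ _ hpos.ne']
  calc _ = ∫⁻ y : ℝ, ENNReal.ofReal (g ⌊y⌋ (Int.fract y)) * φ (Int.fract y) := by
        rw [lintegral_Ioi_eq_lintegral_rpow hb]
        refine lintegral_congr fun y => ?_
        rw [Real.logb_rpow hb0 hb.ne', ← mul_assoc, hjacobian]
    _ = ∑' k : ℤ, ∫⁻ u in Ico (0 : ℝ) 1, ENNReal.ofReal (g k u) * φ u :=
        lintegral_comp_floor_fract fun k u => ENNReal.ofReal (g k u) * φ u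
    _ = ∫⁻ u in Ico (0 : ℝ) 1, (∑' k : ℤ, ENNReal.ofReal (g k u)) * φ u := by
        rw [← lintegral_tsum (f := fun k u => ENNReal.ofReal (g k u) * φ u)
          fun k => ((hg.measurable k).ennreal_ofReal.mul hφ).aemeasurable]
        simp only [ENNReal.tsum_mul_right]
    _ = ∫⁻ u in Ico (0 : ℝ) 1, φ u :=
        setLIntegral_congr_fun measurableSet_Ico fun u hu => by
          rw [hg.tsum_ofReal_eq_one hu, one_mul]

lemma lintegral_generatorDensity_mul (hg : IsUniformGenerator g) (hb : 1 < b)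
    {φ : ℝ → ℝ≥0∞} (hφ : Measurable φ) :
    ∫⁻ x, ENNReal.ofReal (generatorDensity b g x) * φ (Int.fract (Real.logb b x))
      = ∫⁻ u in Ico (0 : ℝ) 1, φ u := by
  rw [← hg.setLIntegral_Ioi_generatorDensity_mul hb hφ]
  refine (setLIntegral_eq_of_support_subset fun x hx => ?_).symm
  by_contra hx0
  simp [generatorDensity_of_nonpos b g (not_lt.mp hx0)] at hx

lemma integral_generatorDensity (hg : IsUniformGenerator g) (hb : 1 < b) :
    ∫ x, generatorDensity b g x = 1 := by
  have hlintegral := hg.lintegral_generatorDensity_mul hb (φ := 1) measurable_const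
  simp only [Pi.one_apply, mul_one, setLIntegral_one, Real.volume_Ico, sub_zero,
    ENNReal.ofReal_one] at hlintegral
  rw [integral_eq_lintegral_of_nonneg_ae (ae_of_all _ (hg.generatorDensity_nonneg hb.le))
    (measurable_generatorDensity hg.measurable b).aestronglyMeasurable, hlintegral,
    ENNReal.toReal_one]

lemma withDensity_generatorDensity_Ioi (hg : IsUniformGenerator g) (hb : 1 < b) :
    volume.withDensity (fun x => ENNReal.ofReal (generatorDensity b g x)) (Ioi 0) = 1 := by
  simpa using hg.setLIntegral_Ioi_generatorDensity_mul hb (φ := 1) measurable_const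

lemma map_fract_logb_withDensity_generatorDensity (hg : IsUniformGenerator g) (hb : 1 < b) :
    (volume.withDensity fun x => ENNReal.ofReal (generatorDensity b g x)).map
      (fun x => Int.fract (Real.logb b x)) = volume.restrict (Ico 0 1) := by
  refine Measure.ext_of_lintegral _ fun φ hφ => ?_
  rw [lintegral_map hφ (measurable_fract_logb b),
    lintegral_withDensity_eq_lintegral_mul _
      (measurable_generatorDensity hg.measurable b).ennreal_ofReal
      (g := fun x => φ (Int.fract (Real.logb b x))) (hφ.comp (measurable_fract_logb b))]
  exact hg.lintegral_generatorDensity_mul hb hφ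

end IsUniformGenerator

theorem pdf_of_uniform_generator_is_benford_general
    {Ω : Type*} [MeasurableSpace Ω] (ℙ : Measure Ω)
    (b : ℕ) (hb : 2 ≤ b)
    (g : ℤ → ℝ → ℝ) (hgmeas : ∀ k, Measurable (g k))
    (hgnn : ∀ k, ∀ u ∈ Set.Ico (0 : ℝ) 1, 0 ≤ g k u)
    (hgsum : ∀ u ∈ Set.Ico (0 : ℝ) 1, ∑' k : ℤ, g k u = 1)
    (f : ℝ → ℝ)
    (hfdef : ∀ x : ℝ, f x =
      if 0 < x then g ⌊Real.logb b x⌋ (Int.fract (Real.logb b x)) / (x * Real.log b) else 0)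
    (X : Ω → ℝ) (hX : Measurable X)
    (hlaw : Measure.map X ℙ = volume.withDensity (fun x => ENNReal.ofReal (f x))) :
    (∫ x, f x) = 1 ∧
    ℙ {ω | 0 < X ω} = 1 ∧
    Measure.map (fun ω => Int.fract (Real.logb b (X ω))) ℙ
      = volume.restrict (Set.Ico (0 : ℝ) 1) := by
  have hb1 : (1 : ℝ) < b := Nat.one_lt_cast.mpr hb
  have hg : IsUniformGenerator g := ⟨hgmeas, hgnn, hgsum⟩
  obtain rfl : f = generatorDensity b g := funext hfdef
  refine ⟨hg.integral_generatorDensity hb1, ?_, ?_⟩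
  · rw [← hg.withDensity_generatorDensity_Ioi hb1, ← hlaw,
      Measure.map_apply hX measurableSet_Ioi]
    rfl
  · rw [← hg.map_fract_logb_withDensity_generatorDensity hb1, ← hlaw,
      Measure.map_map (measurable_fract_logb b) hX]
    rfl

/-- Given a uniform generator `(g_k)_{k ∈ ℤ}`, the function
`f(x) = g_{⌊log_b x⌋}(⟨log_b x⟩) / (x ln b)` for `x > 0` (and `0` for `x ≤ 0`)
is a probability density, and any random variable with this density is a
positive, base-`b` Benford random variable. -/
theorem pdf_of_uniform_generator_is_benford
    {Ω : Type*} [MeasurableSpace Ω] (ℙ : Measure Ω) [IsProbabilityMeasure ℙ]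
    (b : ℕ) (hb : 2 ≤ b)
    (g : ℤ → ℝ → ℝ) (hgmeas : ∀ k, Measurable (g k))
    (hgnn : ∀ k, ∀ u ∈ Set.Ico (0 : ℝ) 1, 0 ≤ g k u)
    (hgsum : ∀ u ∈ Set.Ico (0 : ℝ) 1, ∑' k : ℤ, g k u = 1)
    (f : ℝ → ℝ)
    (hfdef : ∀ x : ℝ, f x =
      if 0 < x then g ⌊Real.logb b x⌋ (Int.fract (Real.logb b x)) / (x * Real.log b) else 0)
    (X : Ω → ℝ) (hX : Measurable X)
    (hlaw : Measure.map X ℙ = volume.withDensity (fun x => ENNReal.ofReal (f x))) :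
    (∫ x, f x) = 1 ∧
    ℙ {ω | 0 < X ω} = 1 ∧
    Measure.map (fun ω => Int.fract (Real.logb b (X ω))) ℙ
      = volume.restrict (Set.Ico (0 : ℝ) 1) :=
  pdf_of_uniform_generator_is_benford_general ℙ b hb g hgmeas hgnn hgsum f hfdef X hX hlaw
end

section
/- Let b ≥ 2 be an integer and let (α_k)_{k∈ℤ} be nonnegative reals with ∑_{k∈ℤ} α_k = 1. Define f : ℝ → [0,∞) by f(x) := α_{⌊log_b x⌋} / (x · ln b) for x > 0 and f(x) := 0 for x ≤ 0 (so f(x) = α_k/(x ln b) on each interval [b^k, b^{k+1})). Then ∫_ℝ f dx = 1, and any random variable X with density f is base-b Benford. -/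
open MeasureTheory
open scoped ENNReal

private lemma lintegral_image_deriv {s : Set ℝ} {φ φ' : ℝ → ℝ} (hs : MeasurableSet s)
    (hφ : ∀ x ∈ s, HasDerivWithinAt φ (φ' x) s x) (hinj : Set.InjOn φ s) (g : ℝ → ℝ≥0∞) :
    ∫⁻ x in φ '' s, g x = ∫⁻ x in s, ENNReal.ofReal |φ' x| * g (φ x) := by
  simpa only [ContinuousLinearMap.det_toSpanSingleton] using
    lintegral_image_eq_lintegral_abs_det_fderiv_mul volume hs
      (fun x hx => (hφ x hx).hasFDerivWithinAt) hinj g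

/-- Given nonnegative `(α_k)_{k ∈ ℤ}` with `∑_k α_k = 1`, the function
`f(x) = α_{⌊log_b x⌋} / (x ln b)` for `x > 0` (and `0` for `x ≤ 0`) is a
probability density, and any random variable with this density is a positive,
base-`b` Benford random variable. -/
theorem pdf_of_weights_is_benford
    {Ω : Type*} [MeasurableSpace Ω] (ℙ : Measure Ω) [IsProbabilityMeasure ℙ]
    (b : ℕ) (hb : 2 ≤ b)
    (α : ℤ → ℝ) (hαnn : ∀ k, 0 ≤ α k) (hαsum : ∑' k : ℤ, α k = 1)
    (f : ℝ → ℝ)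
    (hfdef : ∀ x : ℝ, f x =
      if 0 < x then α ⌊Real.logb b x⌋ / (x * Real.log b) else 0)
    (X : Ω → ℝ) (hX : Measurable X)
    (hlaw : Measure.map X ℙ = volume.withDensity (fun x => ENNReal.ofReal (f x))) :
    (∫ x, f x) = 1 ∧
    ℙ {ω | 0 < X ω} = 1 ∧
    Measure.map (fun ω => Int.fract (Real.logb b (X ω))) ℙ
      = volume.restrict (Set.Ico (0 : ℝ) 1) := by
  have hbR : (1:ℝ) < (b:ℝ) := by exact_mod_cast lt_of_lt_of_le one_lt_two hb
  set L : ℝ := Real.log b with hLdef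
  have hL : 0 < L := Real.log_pos hbR
  have hf_nonneg : ∀ x, 0 ≤ f x := by
    intro x; rw [hfdef]
    split
    · exact div_nonneg (hαnn _) (mul_pos (by assumption) hL).le
    · exact le_rfl
  have hlogb_meas : Measurable (Real.logb b) := by
    have : Real.logb b = fun x => Real.log x / L := by funext x; rfl
    rw [this]; exact Real.measurable_log.div_const L
  have hf_meas : Measurable f := by
    have : f = fun x => if 0 < x then α ⌊Real.logb b x⌋ / (x * L) else 0 := funext hfdef
    rw [this]
    exact Measurable.ite measurableSet_Ioi
      ((measurable_from_top.comp (Int.measurable_floor.comp hlogb_meas)).div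
        (measurable_id.mul_const L)) measurable_const
  -- total mass
  have htot : ∫⁻ x, ENNReal.ofReal (f x) = 1 := by
    have h1 : (Measure.map X ℙ) Set.univ = 1 := by
      rw [Measure.map_apply hX MeasurableSet.univ]; simp
    rw [hlaw, withDensity_apply _ MeasurableSet.univ, Measure.restrict_univ] at h1
    exact h1
  -- split off nonpositive part
  have hsplit : ∀ A : Set ℝ, MeasurableSet A →
      ∫⁻ x in A, ENNReal.ofReal (f x) = ∫⁻ x in A ∩ Set.Ioi 0, ENNReal.ofReal (f x) := by
    intro A hA
    have hFind : ∀ x, ENNReal.ofReal (f x)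
        = (Set.Ioi (0:ℝ)).indicator (fun x => ENNReal.ofReal (f x)) x := by
      intro x
      by_cases hx : 0 < x
      · simp [Set.indicator, hx]
      · simp [Set.indicator, hx, hfdef x]
    calc ∫⁻ x in A, ENNReal.ofReal (f x)
        = ∫⁻ x in A, (Set.Ioi (0:ℝ)).indicator (fun x => ENNReal.ofReal (f x)) x :=
          lintegral_congr fun x => hFind x
      _ = ∫⁻ x in A ∩ Set.Ioi 0, ENNReal.ofReal (f x) := by
          rw [lintegral_indicator measurableSet_Ioi,
            Measure.restrict_restrict measurableSet_Ioi, Set.inter_comm]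
  -- change of variables
  set φ : ℝ → ℝ := fun y => Real.exp (y * L) with hφdef
  have hφpos : ∀ y, 0 < φ y := fun y => Real.exp_pos _
  have hφd : ∀ y, HasDerivAt φ (φ y * L) y := by
    intro y
    have h1 : HasDerivAt (fun y : ℝ => y * L) L y := by
      simpa using (hasDerivAt_id y).mul_const L
    simpa [hφdef] using h1.exp
  have hφinj : Function.Injective φ := by
    intro a c h
    have := Real.exp_injective h
    exact mul_right_cancel₀ hL.ne' this
  have hlogbφ : ∀ y, Real.logb b (φ y) = y := by
    intro y
    rw [Real.logb, hφdef]; simp only []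
    rw [Real.log_exp]
    exact mul_div_cancel_right₀ y hL.ne'
  have hφimg : ∀ s : Set ℝ, φ '' s = Real.logb b ⁻¹' s ∩ Set.Ioi 0 := by
    intro s
    ext x
    constructor
    · rintro ⟨y, hy, rfl⟩
      exact ⟨by simpa [hlogbφ y] using hy, hφpos y⟩
    · rintro ⟨hx1, hx2⟩
      refine ⟨Real.logb b x, hx1, ?_⟩
      rw [hφdef]; simp only []
      rw [Real.logb, div_mul_cancel₀ _ hL.ne', Real.exp_log hx2]
  have key : ∀ s : Set ℝ, MeasurableSet s →
      ∫⁻ x in Real.logb b ⁻¹' s ∩ Set.Ioi 0, ENNReal.ofReal (f x)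
        = ∫⁻ y in s, ENNReal.ofReal (α ⌊y⌋) := by
    intro s hs
    rw [← hφimg, lintegral_image_deriv hs (fun y _ => (hφd y).hasDerivWithinAt)
      hφinj.injOn (fun x => ENNReal.ofReal (f x))]
    refine lintegral_congr fun y => ?_
    rw [hfdef, if_pos (hφpos y), hlogbφ y, abs_of_pos (mul_pos (hφpos y) hL),
      ← ENNReal.ofReal_mul (mul_pos (hφpos y) hL).le, mul_comm (φ y * L),
      div_mul_cancel₀ _ (mul_pos (hφpos y) hL).ne']
  -- part 1
  have part1 : (∫ x, f x) = 1 := by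
    rw [integral_eq_lintegral_of_nonneg_ae (Filter.Eventually.of_forall hf_nonneg)
      hf_meas.aestronglyMeasurable, htot]
    simp
  -- part 2
  have hneg : ∫⁻ x in (Set.Ioi (0:ℝ))ᶜ, ENNReal.ofReal (f x) = 0 := by
    have hz : ∀ x ∈ (Set.Ioi (0:ℝ))ᶜ, ENNReal.ofReal (f x) = 0 := by
      intro x hx
      rw [hfdef, if_neg (by simpa using hx)]
      simp
    rw [setLIntegral_congr_fun measurableSet_Ioi.compl
      hz, lintegral_zero]
  have hIoi : ∫⁻ x in Set.Ioi (0:ℝ), ENNReal.ofReal (f x) = 1 := by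
    have h := lintegral_add_compl (fun x => ENNReal.ofReal (f x)) (measurableSet_Ioi (a := (0:ℝ))) (μ := volume)
    rw [htot, hneg, add_zero] at h
    exact h
  have part2 : ℙ {ω | 0 < X ω} = 1 := by
    have : {ω | 0 < X ω} = X ⁻¹' Set.Ioi 0 := rfl
    rw [this, ← Measure.map_apply hX measurableSet_Ioi, hlaw,
      withDensity_apply _ measurableSet_Ioi]
    exact hIoi
  -- step A
  have hg_meas : Measurable (fun y : ℝ => ENNReal.ofReal (α ⌊y⌋)) :=
    ENNReal.measurable_ofReal.comp (measurable_from_top.comp Int.measurable_floor)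
  have stepA : Measure.map (Real.logb b ∘ X) ℙ
      = volume.withDensity (fun y => ENNReal.ofReal (α ⌊y⌋)) := by
    rw [← Measure.map_map hlogb_meas hX, hlaw]
    ext s hs
    rw [Measure.map_apply hlogb_meas hs, withDensity_apply _ (hlogb_meas hs),
      hsplit _ (hlogb_meas hs), key s hs, withDensity_apply _ hs]
  -- step B
  have hsummable : Summable α := by
    by_contra h
    rw [tsum_eq_zero_of_not_summable h] at hαsum
    norm_num at hαsum
  have hαtsum : ∑' k : ℤ, ENNReal.ofReal (α k) = 1 := by
    rw [← ENNReal.ofReal_tsum_of_nonneg hαnn hsummable, hαsum, ENNReal.ofReal_one]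
  have hfloor_eq : ∀ (k : ℤ) (y : ℝ), y - (k:ℝ) ∈ Set.Ico (0:ℝ) 1 → ⌊y⌋ = k := by
    intro k y hy
    rw [Set.mem_Ico] at hy
    rw [Int.floor_eq_iff]
    constructor
    · linarith [hy.1]
    · linarith [hy.2]
  have stepB : Measure.map Int.fract (volume.withDensity (fun y => ENNReal.ofReal (α ⌊y⌋)))
      = volume.restrict (Set.Ico (0 : ℝ) 1) := by
    ext s hs
    set t : Set ℝ := s ∩ Set.Ico 0 1 with htdef
    have ht : MeasurableSet t := hs.inter measurableSet_Ico
    have htsub : t ⊆ Set.Ico (0:ℝ) 1 := Set.inter_subset_right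
    have hpre : Int.fract ⁻¹' s = ⋃ k : ℤ, (fun y : ℝ => y - (k:ℝ)) ⁻¹' t := by
      ext y
      simp only [Set.mem_preimage, Set.mem_iUnion]
      constructor
      · intro hy
        exact ⟨⌊y⌋, ⟨hy, Int.fract_nonneg y, Int.fract_lt_one y⟩⟩
      · rintro ⟨k, hk⟩
        have hfl := hfloor_eq k y (htsub hk)
        have : Int.fract y = y - (k:ℝ) := by rw [Int.fract, hfl]
        rw [this]; exact hk.1
    have hdisj : Pairwise (Function.onFun Disjoint
        (fun k : ℤ => (fun y : ℝ => y - (k:ℝ)) ⁻¹' t)) := by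
      intro k j hkj
      refine Set.disjoint_left.2 fun y hyk hyj => ?_
      have h1 := hfloor_eq k y (htsub hyk)
      have h2 := hfloor_eq j y (htsub hyj)
      exact hkj (h1 ▸ h2)
    have hmeask : ∀ k : ℤ, MeasurableSet ((fun y : ℝ => y - (k:ℝ)) ⁻¹' t) :=
      fun k => ht.preimage (measurable_id.sub_const _)
    have hBk : ∀ k : ℤ,
        (volume.withDensity (fun y => ENNReal.ofReal (α ⌊y⌋)))
          ((fun y : ℝ => y - (k:ℝ)) ⁻¹' t) = ENNReal.ofReal (α k) * volume t := by
      intro k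
      have hcongr : ∀ y ∈ (fun y : ℝ => y - (k:ℝ)) ⁻¹' t,
          ENNReal.ofReal (α ⌊y⌋) = ENNReal.ofReal (α k) := by
        intro y hy
        rw [hfloor_eq k y (htsub hy)]
      rw [withDensity_apply _ (hmeask k),
        setLIntegral_congr_fun (hmeask k) hcongr,
        setLIntegral_const]
      congr 1
      have hset : (fun y : ℝ => y - (k:ℝ)) ⁻¹' t = (fun y : ℝ => (-(k:ℝ)) + y) ⁻¹' t := by
        ext y; simp [sub_eq_neg_add]
      rw [hset]
      exact measure_preimage_add volume _ t
    rw [Measure.map_apply measurable_fract hs, hpre, measure_iUnion hdisj hmeask,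
      tsum_congr hBk, ENNReal.tsum_mul_right, hαtsum, one_mul,
      Measure.restrict_apply hs]
  refine ⟨part1, part2, ?_⟩
  have hcomp : (fun ω => Int.fract (Real.logb b (X ω)))
      = Int.fract ∘ (Real.logb b ∘ X) := rfl
  rw [hcomp, ← Measure.map_map measurable_fract (hlogb_meas.comp hX), stepA, stepB]
end

section
/- Let b ≥ 2 be an integer and let h : ℝ → [0,1] be a measurable seed function. Define f : ℝ → [0,∞) by f(x) := ( h(log_b x) − h(log_b x − 1) ) / (x · ln b) for x > 0 and f(x) := 0 for x ≤ 0. Then f is nonnegative with ∫_ℝ f dx = 1, and any random variable X whose law has density f with respect to Lebesgue measure satisfies P(X > 0) = 1 and is base-b Benford. -/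
open MeasureTheory Filter

lemma my_lintegral_image {s : Set ℝ} {f f' : ℝ → ℝ} (hs : MeasurableSet s)
    (hf' : ∀ x ∈ s, HasDerivWithinAt f (f' x) s x) (hf : Set.InjOn f s) (g : ℝ → ENNReal) :
    ∫⁻ x in f '' s, g x = ∫⁻ x in s, ENNReal.ofReal |f' x| * g (f x) := by
  simpa only [ContinuousLinearMap.det_toSpanSingleton] using
    lintegral_image_eq_lintegral_abs_det_fderiv_mul volume hs
      (fun x hx => (hf' x hx).hasFDerivWithinAt) hf g

lemma my_telescope (A : ℤ → ℝ) (m : ℤ) : ∀ M : ℤ, m ≤ M →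
    ∑ n ∈ Finset.Icc m M, (A n - A (n - 1)) = A M - A (m - 1) := by
  refine Int.le_induction ?_ ?_
  · simp
  · intro M hmM ih
    have hins : Finset.Icc m (M + 1) = insert (M + 1) (Finset.Icc m M) := by
      ext n; simp only [Finset.mem_Icc, Finset.mem_insert]; omega
    rw [hins, Finset.sum_insert (by simp [Finset.mem_Icc]), ih]
    have : (M : ℤ) + 1 - 1 = M := by ring
    rw [this]; ring

/-- From a measurable seed function `h`, the function
`f(x) = (h(log_b x) − h(log_b x − 1)) / (x ln b)` for `x > 0` (and `0` for
`x ≤ 0`) is a probability density, and any random variable with this density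
is a positive, base-`b` Benford random variable. -/
theorem pdf_of_seed_function_is_benford
    {Ω : Type*} [MeasurableSpace Ω] (ℙ : Measure Ω) [IsProbabilityMeasure ℙ]
    (b : ℕ) (hb : 2 ≤ b)
    (h : ℝ → ℝ) (hmeas : Measurable h)
    (hrange : ∀ v, h v ∈ Set.Icc (0 : ℝ) 1)
    (hmono : ∀ v, h v ≤ h (v + 1))
    (hbot : Tendsto h atBot (nhds 0))
    (htop : Tendsto h atTop (nhds 1))
    (f : ℝ → ℝ)
    (hfdef : ∀ x : ℝ, f x =
      if 0 < x then (h (Real.logb b x) - h (Real.logb b x - 1)) / (x * Real.log b) else 0)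
    (X : Ω → ℝ) (hX : Measurable X)
    (hlaw : Measure.map X ℙ = volume.withDensity (fun x => ENNReal.ofReal (f x))) :
    (∀ x, 0 ≤ f x) ∧
    (∫ x, f x) = 1 ∧
    ℙ {ω | 0 < X ω} = 1 ∧
    Measure.map (fun ω => Int.fract (Real.logb b (X ω))) ℙ
      = volume.restrict (Set.Ico (0 : ℝ) 1) := by
  have hb1 : (1 : ℝ) < (b : ℝ) := by exact_mod_cast lt_of_lt_of_le one_lt_two (by exact_mod_cast hb)
  have hlb : 0 < Real.log b := Real.log_pos hb1
  have hstep : ∀ v : ℝ, h (v - 1) ≤ h v := by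
    intro v; simpa using hmono (v - 1)
  have hf_nonneg : ∀ x, 0 ≤ f x := by
    intro x; rw [hfdef]
    split_ifs with hx
    · exact div_nonneg (sub_nonneg.2 (hstep _)) (by positivity)
    · exact le_rfl
  have hlogbm : Measurable (Real.logb b) := Real.measurable_log.div_const _
  have hfm : Measurable f := by
    have : f = fun x => if 0 < x then
        (h (Real.logb b x) - h (Real.logb b x - 1)) / (x * Real.log b) else 0 := funext hfdef
    rw [this]
    exact Measurable.ite measurableSet_Ioi
      (((hmeas.comp hlogbm).sub (hmeas.comp (hlogbm.sub_const 1))).div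
        (measurable_id.mul_const _)) measurable_const
  set F : ℝ → ENNReal := fun x => ENNReal.ofReal (f x) with hF
  have hFm : Measurable F := ENNReal.measurable_ofReal.comp hfm
  haveI hmapP : IsProbabilityMeasure (Measure.map X ℙ) :=
    Measure.isProbabilityMeasure_map hX.aemeasurable
  have htot : ∫⁻ x, F x = 1 := by
    have h1 : Measure.map X ℙ Set.univ = 1 := measure_univ
    rw [hlaw, withDensity_apply _ MeasurableSet.univ, Measure.restrict_univ] at h1
    exact h1
  have hint : (∫ x, f x) = 1 := by
    rw [integral_eq_lintegral_of_nonneg_ae (ae_of_all _ hf_nonneg) hfm.aestronglyMeasurable,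
      htot]
    simp
  have hIic : ∫⁻ x in Set.Iic 0, F x = 0 := by
    have : ∀ x ∈ Set.Iic (0:ℝ), F x = 0 := by
      intro x hx
      simp only [hF, hfdef x, if_neg (not_lt.2 (Set.mem_Iic.1 hx)), ENNReal.ofReal_zero]
    rw [setLIntegral_congr_fun (g := fun _ => 0) measurableSet_Iic this]
    simp
  have hIoi : ∫⁻ x in Set.Ioi 0, F x = 1 := by
    have := lintegral_add_compl (μ := volume) F (measurableSet_Ioi (a := (0:ℝ)))
    rw [Set.compl_Ioi, hIic, add_zero, htot] at this
    exact this
  have hpos : ℙ {ω | 0 < X ω} = 1 := by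
    have : {ω | 0 < X ω} = X ⁻¹' Set.Ioi 0 := rfl
    rw [this, ← Measure.map_apply hX measurableSet_Ioi, hlaw,
      withDensity_apply _ measurableSet_Ioi, hIoi]
  refine ⟨hf_nonneg, hint, hpos, ?_⟩
  -- Part 4
  have hgm : Measurable fun x : ℝ => Int.fract (Real.logb b x) := measurable_fract.comp hlogbm
  have hmapeq : Measure.map (fun ω => Int.fract (Real.logb b (X ω))) ℙ
      = Measure.map (fun x => Int.fract (Real.logb b x)) (Measure.map X ℙ) :=
    (Measure.map_map hgm hX).symm
  rw [hmapeq]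
  haveI : IsProbabilityMeasure
      (Measure.map (fun x => Int.fract (Real.logb b x)) (Measure.map X ℙ)) :=
    Measure.isProbabilityMeasure_map hgm.aemeasurable
  refine MeasureTheory.Measure.ext_of_Ico _ _ (fun a a' haa' => ?_)
  set c : ℝ := max a 0 with hc
  set d : ℝ := min a' 1 with hd
  have hIcd : Set.Ico a a' ∩ Set.Ico 0 1 = Set.Ico c d := Set.Ico_inter_Ico
  have hRHS : volume.restrict (Set.Ico 0 1) (Set.Ico a a') = volume (Set.Ico c d) := by
    rw [Measure.restrict_apply measurableSet_Ico, hIcd]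
  have hpre : (fun x : ℝ => Int.fract (Real.logb b x)) ⁻¹' (Set.Ico a a')
      = (fun x : ℝ => Int.fract (Real.logb b x)) ⁻¹' (Set.Ico c d) := by
    ext x
    simp only [Set.mem_preimage]
    constructor
    · intro hx
      rw [← hIcd]
      exact ⟨hx, Int.fract_nonneg _, Int.fract_lt_one _⟩
    · intro hx
      rw [← hIcd] at hx
      exact hx.1
  have hLHS0 : Measure.map (fun x => Int.fract (Real.logb b x)) (Measure.map X ℙ)
      (Set.Ico a a')
      = ∫⁻ x in (fun x : ℝ => Int.fract (Real.logb b x)) ⁻¹' (Set.Ico c d), F x := by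
    rw [Measure.map_apply hgm measurableSet_Ico, hlaw,
      withDensity_apply _ (hgm measurableSet_Ico), hpre]
  by_cases hcd : c < d
  swap
  · -- degenerate case
    have hempty : Set.Ico c d = (∅ : Set ℝ) := Set.Ico_eq_empty hcd
    rw [hLHS0, hRHS, hempty]
    simp
  · have hc0 : 0 ≤ c := le_max_right _ _
    have hd1 : d ≤ 1 := min_le_right _ _
    set φ : ℝ → ℝ := fun v => Real.exp (v * Real.log b) with hφ
    have hφpos : ∀ v, 0 < φ v := fun v => Real.exp_pos _
    have hφlogb : ∀ v, Real.logb b (φ v) = v := by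
      intro v
      rw [Real.logb, hφ]
      simp only [Real.log_exp]
      field_simp
    have hφx : ∀ x : ℝ, 0 < x → φ (Real.logb b x) = x := by
      intro x hx
      show Real.exp (Real.logb b x * Real.log b) = x
      rw [Real.logb, div_mul_cancel₀ _ hlb.ne', Real.exp_log hx]
    have hφderiv : ∀ v, HasDerivAt φ (φ v * Real.log b) v := by
      intro v
      have h1 : HasDerivAt (fun v : ℝ => v * Real.log b) (Real.log b) v :=
        hasDerivAt_mul_const _
      simpa [hφ, mul_comm, Function.comp_def] using (Real.hasDerivAt_exp (v * Real.log b)).comp v h1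
    have hφinj : Function.Injective φ := by
      intro u v huv
      have := Real.exp_injective huv
      exact mul_right_cancel₀ hlb.ne' this
    set S : Set ℝ := ⋃ n : ℤ, Set.Ico (c + (n : ℝ)) (d + n) with hSdef
    have hfloor : ∀ (n : ℤ) (v : ℝ), v ∈ Set.Ico (c + (n : ℝ)) (d + n) → ⌊v⌋ = n := by
      intro n v hv
      have h1 : (n : ℝ) ≤ v := by have := hv.1; linarith
      have h2 : v < n + 1 := by have := hv.2; linarith
      exact Int.floor_eq_iff.2 ⟨h1, h2⟩
    have hSmem : ∀ v : ℝ, v ∈ S ↔ Int.fract v ∈ Set.Ico c d := by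
      intro v
      constructor
      · intro hv
        rcases Set.mem_iUnion.1 hv with ⟨n, hn⟩
        have hfl := hfloor n v hn
        have : Int.fract v = v - n := by rw [Int.fract, hfl]
        rw [this]
        exact ⟨by have := hn.1; linarith, by have := hn.2; linarith⟩
      · intro hv
        refine Set.mem_iUnion.2 ⟨⌊v⌋, ?_⟩
        have h1 : c ≤ v - ⌊v⌋ := hv.1
        have h2 : v - ⌊v⌋ < d := hv.2
        exact ⟨by linarith, by linarith⟩
    have hS : MeasurableSet S := MeasurableSet.iUnion fun n => measurableSet_Ico
    have himg : φ '' S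
        = (fun x : ℝ => Int.fract (Real.logb b x)) ⁻¹' (Set.Ico c d) ∩ Set.Ioi 0 := by
      ext x
      constructor
      · rintro ⟨v, hv, rfl⟩
        refine ⟨?_, hφpos v⟩
        simp only [Set.mem_preimage, hφlogb v]
        exact (hSmem v).1 hv
      · rintro ⟨hx1, hx2⟩
        refine ⟨Real.logb b x, (hSmem _).2 hx1, hφx x hx2⟩
    have hsplit : ∫⁻ x in (fun x : ℝ => Int.fract (Real.logb b x)) ⁻¹' (Set.Ico c d), F x
        = ∫⁻ x in φ '' S, F x := by
      set T := (fun x : ℝ => Int.fract (Real.logb b x)) ⁻¹' (Set.Ico c d) with hT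
      have hTm : MeasurableSet T := hgm measurableSet_Ico
      have hdiff : ∫⁻ x in T \ Set.Ioi 0, F x = 0 := by
        have hz : ∀ x ∈ T \ Set.Ioi 0, F x = 0 := by
          intro x hx
          have : ¬ (0 < x) := hx.2
          simp only [hF, hfdef x, if_neg this, ENNReal.ofReal_zero]
        rw [setLIntegral_congr_fun (g := fun _ => 0) (hTm.diff measurableSet_Ioi) hz]
        simp
      have := lintegral_inter_add_diff F T (measurableSet_Ioi (a := (0:ℝ))) (μ := volume)
      rw [hdiff, add_zero] at this
      rw [← this, himg]
    have hCoV : ∫⁻ x in φ '' S, F x = ∫⁻ v in S, ENNReal.ofReal (h v - h (v - 1)) := by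
      rw [my_lintegral_image hS (fun v _ => (hφderiv v).hasDerivWithinAt) hφinj.injOn F]
      refine lintegral_congr fun v => ?_
      have hfv : f (φ v) = (h v - h (v - 1)) / (φ v * Real.log b) := by
        rw [hfdef, if_pos (hφpos v), hφlogb]
      have hpos' : 0 < φ v * Real.log b := by positivity
      rw [hF]
      simp only []
      rw [hfv, abs_of_pos hpos', ← ENNReal.ofReal_mul hpos'.le,
        mul_div_cancel₀ _ hpos'.ne']
    have hdisj : Pairwise (Function.onFun Disjoint
        fun n : ℤ => Set.Ico (c + (n : ℝ)) (d + n)) := by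
      intro m n hmn
      rw [Function.onFun, Set.disjoint_left]
      intro v hvm hvn
      exact hmn ((hfloor m v hvm).symm.trans (hfloor n v hvn))
    have hUnion : ∫⁻ v in S, ENNReal.ofReal (h v - h (v - 1))
        = ∑' n : ℤ, ∫⁻ v in Set.Ico (c + (n : ℝ)) (d + n), ENNReal.ofReal (h v - h (v - 1)) :=
      lintegral_iUnion (fun n => measurableSet_Ico) hdisj _
    -- interval integrability
    have hIIgen : ∀ (g : ℝ → ℝ), Measurable g → (∀ v, g v ∈ Set.Icc (0:ℝ) 1) →
        ∀ u w : ℝ, IntervalIntegrable g volume u w := by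
      intro g hgmeas hgrange u w
      rw [intervalIntegrable_iff]
      refine Measure.integrableOn_of_bounded (M := 1) measure_Ioc_lt_top.ne
        hgmeas.aestronglyMeasurable (ae_of_all _ fun v => ?_)
      rw [Real.norm_eq_abs, abs_le]
      exact ⟨by linarith [(hgrange v).1], (hgrange v).2⟩
    have hII : ∀ u w : ℝ, IntervalIntegrable h volume u w := hIIgen h hmeas hrange
    have hIIsub : ∀ u w : ℝ, IntervalIntegrable (fun v => h (v - 1)) volume u w :=
      hIIgen _ (hmeas.comp (measurable_sub_const 1)) (fun v => hrange (v - 1))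
    have hIIadd : ∀ u w : ℝ, IntervalIntegrable (fun v => h (v + 1)) volume u w :=
      hIIgen _ (hmeas.comp (measurable_add_const 1)) (fun v => hrange (v + 1))
    set A : ℤ → ℝ := fun n => ∫ v in (c + (n : ℝ))..(d + n), h v with hA
    have hlen : ∀ n : ℤ, c + (n : ℝ) ≤ d + n := fun n => by linarith [hcd.le]
    have hterm : ∀ n : ℤ, ∫⁻ v in Set.Ico (c + (n : ℝ)) (d + n),
        ENNReal.ofReal (h v - h (v - 1)) = ENNReal.ofReal (A n - A (n - 1)) := by
      intro n
      rw [setLIntegral_congr Ico_ae_eq_Ioc]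
      rw [← ofReal_integral_eq_lintegral_ofReal]
      · congr 1
        rw [← intervalIntegral.integral_of_le (hlen n)]
        rw [intervalIntegral.integral_sub (hII _ _) (hIIsub _ _)]
        rw [intervalIntegral.integral_comp_sub_right h 1]
        have e1 : c + (n : ℝ) - 1 = c + ((n - 1 : ℤ) : ℝ) := by push_cast; ring
        have e2 : d + (n : ℝ) - 1 = d + ((n - 1 : ℤ) : ℝ) := by push_cast; ring
        rw [e1, e2]
      · exact (intervalIntegrable_iff_integrableOn_Ioc_of_le (hlen n)).1
          ((hII _ _).sub (hIIsub _ _))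
      · exact ae_of_all _ fun v => sub_nonneg.2 (hstep v)
    have hAmono : Monotone A := by
      refine monotone_int_of_le_succ fun n => ?_
      have e : A (n + 1) = ∫ v in (c + (n : ℝ))..(d + n), h (v + 1) := by
        rw [hA]
        simp only []
        rw [intervalIntegral.integral_comp_add_right h 1]
        congr 1 <;> push_cast <;> ring
      rw [e]
      exact intervalIntegral.integral_mono_on (hlen n) (hII _ _)
        (hIIadd _ _) (fun v _ => hmono v)
    have hA0 : ∀ n : ℤ, 0 ≤ A n := fun n =>
      intervalIntegral.integral_nonneg (hlen n) (fun v _ => (hrange v).1)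
    have hAle : ∀ n : ℤ, A n ≤ d - c := by
      intro n
      have h1 := intervalIntegral.integral_mono_on (hlen n) (hII _ _)
        intervalIntegrable_const (g := fun _ => (1 : ℝ)) (fun v _ => (hrange v).2)
      rw [intervalIntegral.integral_const, smul_eq_mul, mul_one] at h1
      have h2 : A n = ∫ v in (c + (n:ℝ))..(d + n), h v := rfl
      rw [h2]
      linarith
    -- limits
    have hA_interval : ∀ t : ℝ, (∫ v in (c + t)..(d + t), h v)
        = ∫ v in Set.Ioc c d, h (v + t) := by
      intro t
      rw [← intervalIntegral.integral_comp_add_right h t,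
        intervalIntegral.integral_of_le hcd.le]
    have hbound_int : Integrable (fun _ : ℝ => (1 : ℝ))
        (volume.restrict (Set.Ioc c d)) :=
      integrableOn_const measure_Ioc_lt_top.ne
    have hmeas' : ∀ t : ℝ, AEStronglyMeasurable (fun v => h (v + t))
        (volume.restrict (Set.Ioc c d)) := fun t =>
      (hmeas.comp (measurable_add_const t)).aestronglyMeasurable
    have hbdd : ∀ t : ℝ, ∀ᵐ v ∂(volume.restrict (Set.Ioc c d)), ‖h (v + t)‖ ≤ 1 := by
      intro t
      refine ae_of_all _ fun v => ?_
      rw [Real.norm_eq_abs, abs_le]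
      exact ⟨by linarith [(hrange (v + t)).1], (hrange (v + t)).2⟩
    have hone : (∫ v in Set.Ioc c d, (1 : ℝ)) = d - c := by
      simp [Real.volume_Ioc, hcd.le, ENNReal.toReal_ofReal (by linarith : (0:ℝ) ≤ d - c)]
    have hAtop : Tendsto (fun N : ℕ => A N) atTop (nhds (d - c)) := by
      have key : Tendsto (fun N : ℕ => ∫ v in Set.Ioc c d, h (v + N)) atTop
          (nhds (∫ v in Set.Ioc c d, (1 : ℝ))) := by
        refine tendsto_integral_of_dominated_convergence (fun _ => (1 : ℝ))
          (fun N => hmeas' N) hbound_int (fun N => hbdd N) ?_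
        refine ae_of_all _ fun v => ?_
        exact htop.comp (tendsto_atTop_add_const_left _ v tendsto_natCast_atTop_atTop)
      rw [hone] at key
      refine key.congr fun N => ?_
      rw [← hA_interval]
      simp [hA]
    have hAbot : Tendsto (fun N : ℕ => A (-(N : ℤ) - 1)) atTop (nhds 0) := by
      have key : Tendsto (fun N : ℕ => ∫ v in Set.Ioc c d, h (v + (-(N : ℝ) - 1))) atTop
          (nhds (∫ v in Set.Ioc c d, (0 : ℝ))) := by
        refine tendsto_integral_of_dominated_convergence (fun _ => (1 : ℝ))
          (fun N => hmeas' _) hbound_int (fun N => hbdd _) ?_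
        refine ae_of_all _ fun v => ?_
        refine hbot.comp ?_
        have h1 : Tendsto (fun N : ℕ => -(N : ℝ)) atTop atBot :=
          tendsto_neg_atTop_atBot.comp tendsto_natCast_atTop_atTop
        have h2 : Tendsto (fun N : ℕ => (v - 1) + -(N : ℝ)) atTop atBot :=
          tendsto_atBot_add_const_left _ (v - 1) h1
        refine h2.congr fun N => by ring
      rw [integral_zero] at key
      refine key.congr fun N => ?_
      rw [← hA_interval]
      simp only [hA]
      congr 1 <;> push_cast <;> ring
    -- the tsum
    have hsum : ∑' n : ℤ, ENNReal.ofReal (A n - A (n - 1)) = ENNReal.ofReal (d - c) := by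
      apply le_antisymm
      · rw [ENNReal.tsum_eq_iSup_sum]
        refine iSup_le fun Fs => ?_
        rcases Fs.eq_empty_or_nonempty with rfl | hne
        · simp
        · set m := Fs.min' hne with hm
          set M := Fs.max' hne with hM
          have hsub : Fs ⊆ Finset.Icc m M := fun n hn =>
            Finset.mem_Icc.2 ⟨Finset.min'_le _ _ hn, Finset.le_max' _ _ hn⟩
          have hmM : m ≤ M := Finset.min'_le _ _ (Fs.max'_mem hne)
          calc ∑ n ∈ Fs, ENNReal.ofReal (A n - A (n - 1))
              ≤ ∑ n ∈ Finset.Icc m M, ENNReal.ofReal (A n - A (n - 1)) :=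
                Finset.sum_le_sum_of_subset hsub
            _ = ENNReal.ofReal (∑ n ∈ Finset.Icc m M, (A n - A (n - 1))) :=
                (ENNReal.ofReal_sum_of_nonneg fun n _ =>
                  sub_nonneg.2 (hAmono (by omega))).symm
            _ = ENNReal.ofReal (A M - A (m - 1)) := by rw [my_telescope A m M hmM]
            _ ≤ ENNReal.ofReal (d - c) :=
                ENNReal.ofReal_le_ofReal (by linarith [hAle M, hA0 (m - 1)])
      · have hlim : Tendsto (fun N : ℕ => ENNReal.ofReal (A N - A (-(N : ℤ) - 1))) atTop
            (nhds (ENNReal.ofReal (d - c))) := by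
          have h1 : Tendsto (fun N : ℕ => A N - A (-(N : ℤ) - 1)) atTop
              (nhds (d - c - 0)) := hAtop.sub hAbot
          rw [sub_zero] at h1
          exact (ENNReal.continuous_ofReal.tendsto _).comp h1
        refine le_of_tendsto hlim (Eventually.of_forall fun N => ?_)
        have hmM : -(N : ℤ) ≤ (N : ℤ) := by omega
        have e1 : A (N : ℤ) - A (-(N : ℤ) - 1)
            = ∑ n ∈ Finset.Icc (-(N : ℤ)) (N : ℤ), (A n - A (n - 1)) :=
          (my_telescope A (-(N : ℤ)) N hmM).symm
        rw [e1, ENNReal.ofReal_sum_of_nonneg fun n _ => sub_nonneg.2 (hAmono (by omega))]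
        exact ENNReal.sum_le_tsum _
    rw [hLHS0, hRHS, hsplit, hCoV, hUnion, tsum_congr hterm, hsum, Real.volume_Ico]
end

section
/- Let b ≥ 2 be an integer, let h : ℝ → [0,1] be a measurable seed function, let a > 0, and let X be a random variable whose law has density f with respect to Lebesgue measure, where f(x) = ( h(log_b x) − h(log_b x − 1) ) / (x ln b) for x > 0 and f(x) = 0 otherwise. Define the shifted seed function h̃(v) := h(v − log_b a). Then h̃ is a seed function, and the law of aX has density x ↦ ( h̃(log_b x) − h̃(log_b x − 1) ) / (x ln b) for x > 0 (and 0 for x ≤ 0) with respect to Lebesgue measure. -/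
/-!
Scaling by `a > 0` shifts `log_b` of the variable by `log_b a`. Pushing the density of `X`
forward along `x ↦ a x` gives `a⁻¹ f (x / a)`, and since `log_b (x / a) = log_b x - log_b a`
while the factor `a⁻¹` cancels against the `x / a` in the denominator, this is exactly the
density generated by `h(· - log_b a)`.
-/

open MeasureTheory Filter Set Real

def IsSeedFunction (h : ℝ → ℝ) : Prop :=
  (∀ v, h v ∈ Icc (0 : ℝ) 1) ∧ (∀ v, h v ≤ h (v + 1)) ∧
    Tendsto h atBot (nhds 0) ∧ Tendsto h atTop (nhds 1)

theorem IsSeedFunction.comp_sub_const {h : ℝ → ℝ} (hh : IsSeedFunction h) (c : ℝ) :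
    IsSeedFunction fun v => h (v - c) := by
  obtain ⟨hrange, hmono, hbot, htop⟩ := hh
  refine ⟨fun v => hrange _, fun v => ?_, ?_, ?_⟩
  · simpa only [sub_add_eq_add_sub] using hmono (v - c)
  · exact hbot.comp (tendsto_atBot_add_const_right _ (-c) tendsto_id)
  · exact htop.comp (tendsto_atTop_add_const_right _ (-c) tendsto_id)

noncomputable def seedDensity (b : ℝ) (h : ℝ → ℝ) (x : ℝ) : ℝ :=
  if 0 < x then (h (logb b x) - h (logb b x - 1)) / (x * log b) else 0

theorem inv_mul_seedDensity_inv_mul {a : ℝ} (ha : 0 < a) (b : ℝ) (h : ℝ → ℝ) (x : ℝ) :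
    a⁻¹ * seedDensity b h (a⁻¹ * x) = seedDensity b (fun v => h (v - logb b a)) x := by
  have ha' : a⁻¹ ≠ 0 := inv_ne_zero ha.ne'
  unfold seedDensity
  by_cases hx : 0 < x
  · have hlogb : logb b (a⁻¹ * x) = logb b x - logb b a := by
      rw [logb_mul ha' hx.ne', logb_inv]
      ring
    rw [if_pos (by positivity), if_pos hx, hlogb, sub_right_comm _ (logb b a) 1,
      mul_assoc, ← mul_div_assoc, mul_div_mul_left _ _ ha']
  · have hax : ¬0 < a⁻¹ * x := fun hax => hx (pos_of_mul_pos_right hax (inv_pos.2 ha).le)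
    rw [if_neg hax, if_neg hx, mul_zero]

theorem MeasurableEquiv.map_withDensity {α β : Type*} [MeasurableSpace α] [MeasurableSpace β]
    (e : α ≃ᵐ β) (μ : Measure α) (f : α → ENNReal) :
    (μ.withDensity f).map e = (μ.map e).withDensity (f ∘ e.symm) := by
  ext s hs
  rw [e.map_apply, withDensity_apply _ (e.measurable hs), withDensity_apply _ hs,
    e.restrict_map, lintegral_map_equiv]
  simp only [Function.comp_apply, MeasurableEquiv.symm_apply_apply]

theorem map_const_mul_volume_withDensity {a : ℝ} (ha : a ≠ 0) (f : ℝ → ENNReal) :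
    (volume.withDensity f).map (a * ·) =
      volume.withDensity fun x => ENNReal.ofReal |a⁻¹| * f (a⁻¹ * x) := by
  let e : ℝ ≃ᵐ ℝ := (Homeomorph.mulLeft₀ a ha).toMeasurableEquiv
  change (volume.withDensity f).map e = _
  rw [e.map_withDensity, show ⇑e = (a * ·) from rfl, Real.map_volume_mul_left ha,
    withDensity_smul_measure, ← withDensity_smul' _ _ ENNReal.ofReal_ne_top]
  rfl

theorem shifted_seed_function_generates_scaled_rv_general
    {Ω : Type*} [MeasurableSpace Ω] (ℙ : Measure Ω)
    (b : ℕ)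
    (h : ℝ → ℝ)
    (hrange : ∀ v, h v ∈ Set.Icc (0 : ℝ) 1)
    (hmono : ∀ v, h v ≤ h (v + 1))
    (hbot : Tendsto h atBot (nhds 0))
    (htop : Tendsto h atTop (nhds 1))
    (a : ℝ) (ha : 0 < a)
    (X : Ω → ℝ) (hX : Measurable X)
    (hlaw : Measure.map X ℙ = volume.withDensity (fun x => ENNReal.ofReal
      (if 0 < x then (h (Real.logb b x) - h (Real.logb b x - 1)) / (x * Real.log b) else 0))) :
    ((∀ v, h (v - Real.logb b a) ∈ Set.Icc (0 : ℝ) 1) ∧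
     (∀ v, h (v - Real.logb b a) ≤ h (v + 1 - Real.logb b a)) ∧
     Tendsto (fun v => h (v - Real.logb b a)) atBot (nhds 0) ∧
     Tendsto (fun v => h (v - Real.logb b a)) atTop (nhds 1)) ∧
    Measure.map (fun ω => a * X ω) ℙ = volume.withDensity (fun x => ENNReal.ofReal
      (if 0 < x then
        (h (Real.logb b x - Real.logb b a) - h (Real.logb b x - 1 - Real.logb b a))
          / (x * Real.log b)
      else 0)) := by
  refine ⟨IsSeedFunction.comp_sub_const ⟨hrange, hmono, hbot, htop⟩ _, ?_⟩
  change Measure.map ((a * ·) ∘ X) ℙ =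
    volume.withDensity fun x => ENNReal.ofReal (seedDensity b (fun v => h (v - logb b a)) x)
  rw [← Measure.map_map (measurable_const_mul a) hX, hlaw, map_const_mul_volume_withDensity ha.ne']
  congr 1
  funext x
  rw [abs_of_pos (inv_pos.2 ha), ← ENNReal.ofReal_mul (inv_pos.2 ha).le]
  exact congrArg ENNReal.ofReal (inv_mul_seedDensity_inv_mul ha _ h x)

/-- Shift property: if `X` has the pdf produced by a seed function `h`, then
`aX` has the pdf produced by the shifted seed function `h̃(v) = h(v − log_b a)`,
which is again a seed function. -/
theorem shifted_seed_function_generates_scaled_rv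
    {Ω : Type*} [MeasurableSpace Ω] (ℙ : Measure Ω) [IsProbabilityMeasure ℙ]
    (b : ℕ) (hb : 2 ≤ b)
    (h : ℝ → ℝ) (hmeas : Measurable h)
    (hrange : ∀ v, h v ∈ Set.Icc (0 : ℝ) 1)
    (hmono : ∀ v, h v ≤ h (v + 1))
    (hbot : Tendsto h atBot (nhds 0))
    (htop : Tendsto h atTop (nhds 1))
    (a : ℝ) (ha : 0 < a)
    (X : Ω → ℝ) (hX : Measurable X)
    (hlaw : Measure.map X ℙ = volume.withDensity (fun x => ENNReal.ofReal
      (if 0 < x then (h (Real.logb b x) - h (Real.logb b x - 1)) / (x * Real.log b) else 0))) :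
    ((∀ v, h (v - Real.logb b a) ∈ Set.Icc (0 : ℝ) 1) ∧
     (∀ v, h (v - Real.logb b a) ≤ h (v + 1 - Real.logb b a)) ∧
     Tendsto (fun v => h (v - Real.logb b a)) atBot (nhds 0) ∧
     Tendsto (fun v => h (v - Real.logb b a)) atTop (nhds 1)) ∧
    Measure.map (fun ω => a * X ω) ℙ = volume.withDensity (fun x => ENNReal.ofReal
      (if 0 < x then
        (h (Real.logb b x - Real.logb b a) - h (Real.logb b x - 1 - Real.logb b a))
          / (x * Real.log b)
      else 0)) :=
  shifted_seed_function_generates_scaled_rv_general ℙ b h hrange hmono hbot htop a ha X hX hlaw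
end

section
/- Let b ≥ 2 be an integer and let X be a base-b Benford random variable. Then for every real a > 0, the random variable aX is also base-b Benford. -/
/-!
Since `logb b (a * X) = logb b a + logb b X`, it suffices that the uniform law on `[0, 1)` is
invariant under the rotation `t ↦ ⟨c + t⟩`. Translation by `c` carries it to the uniform law on
`[c, c + 1)`, and reduction mod 1 carries that back to the uniform law on `[0, 1)`, because
`[c, c + 1)` and `[0, 1)` are both fundamental domains of `ℤ` acting on `ℝ` by translation and
preimages under `Int.fract` are `ℤ`-invariant.
-/

open MeasureTheory Set

theorem Int.fract_add_fract_right {R : Type*} [Ring R] [LinearOrder R] [FloorRing R]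
    [IsStrictOrderedRing R] (a b : R) : Int.fract (a + Int.fract b) = Int.fract (a + b) := by
  rw [← Int.fract_add_intCast _ ⌊b⌋, add_assoc, Int.fract_add_floor]

theorem Int.preimage_fract_inter_Ico {R : Type*} [Ring R] [LinearOrder R] [FloorRing R]
    [IsStrictOrderedRing R] (A : Set R) :
    Int.fract ⁻¹' A ∩ Ico 0 1 = A ∩ Ico 0 1 := by
  ext x
  simp only [mem_inter_iff, mem_preimage, and_congr_left_iff]
  intro hx
  rw [Int.fract_eq_self.2 hx]

theorem map_fract_volume_restrict_Ico (c : ℝ) :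
    (volume.restrict (Ico c (c + 1))).map Int.fract = volume.restrict (Ico (0 : ℝ) 1) := by
  ext A hA
  have hfd (t : ℝ) := isAddFundamentalDomain_Ioc (zero_lt_one' ℝ) t
  have hinv (g : AddSubgroup.zmultiples (1 : ℝ)) :
      (g +ᵥ ·) ⁻¹' (Int.fract ⁻¹' A) = Int.fract ⁻¹' A := by
    obtain ⟨n, hn⟩ := AddSubgroup.mem_zmultiples_iff.1 g.2
    ext x
    simp [AddSubgroup.vadd_def, ← hn, Int.fract_intCast_add]
  have hpre := measurable_fract hA
  rw [Measure.map_apply measurable_fract hA, Measure.restrict_congr_set Ico_ae_eq_Ioc,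
    Measure.restrict_apply hpre, (hfd c).measure_set_eq (by simpa using hfd 0) hpre hinv,
    ← Measure.restrict_apply hpre, ← Measure.restrict_congr_set Ico_ae_eq_Ioc,
    Measure.restrict_apply hpre, Int.preimage_fract_inter_Ico, Measure.restrict_apply hA]

theorem map_fract_const_add_volume_restrict_Ico (c : ℝ) :
    (volume.restrict (Ico (0 : ℝ) 1)).map (fun t => Int.fract (c + t))
      = volume.restrict (Ico (0 : ℝ) 1) := by
  have hshift :
      (volume.restrict (Ico (0 : ℝ) 1)).map (c + ·) = volume.restrict (Ico c (c + 1)) := by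
    conv_rhs => rw [← map_add_left_eq_self volume c]
    rw [Measure.restrict_map (measurable_const_add c) measurableSet_Ico]
    simp
  have hreduce := congrArg (Measure.map Int.fract) hshift
  rwa [Measure.map_map measurable_fract (measurable_const_add c),
    map_fract_volume_restrict_Ico] at hreduce

theorem map_fract_const_add_of_map_fract_eq {Ω : Type*} [MeasurableSpace Ω]
    {μ : Measure Ω} {Y : Ω → ℝ} (hY : Measurable Y)
    (h : μ.map (fun ω => Int.fract (Y ω)) = volume.restrict (Ico 0 1)) (c : ℝ) :
    μ.map (fun ω => Int.fract (c + Y ω)) = volume.restrict (Ico 0 1) := by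
  have hcomp : (fun ω => Int.fract (c + Y ω))
      = (fun t => Int.fract (c + t)) ∘ (fun ω => Int.fract (Y ω)) := by
    ext ω
    simp [Int.fract_add_fract_right]
  rw [hcomp, ← Measure.map_map (measurable_const_add c).fract hY.fract, h,
    map_fract_const_add_volume_restrict_Ico]

theorem benford_smul_general
    {Ω : Type*} [MeasurableSpace Ω] (ℙ : Measure Ω) [IsProbabilityMeasure ℙ]
    (b : ℕ) (X : Ω → ℝ) (hX : Measurable X)
    (hpos : ℙ {ω | 0 < X ω} = 1)
    (hben : Measure.map (fun ω => Int.fract (Real.logb b (X ω))) ℙ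
      = volume.restrict (Set.Ico (0 : ℝ) 1)) :
    ∀ a : ℝ, 0 < a →
      ℙ {ω | 0 < a * X ω} = 1 ∧
      Measure.map (fun ω => Int.fract (Real.logb b (a * X ω))) ℙ
        = volume.restrict (Set.Ico (0 : ℝ) 1) := by
  intro a ha
  have hXpos : ∀ᵐ ω ∂ℙ, 0 < X ω := (mem_ae_iff_prob_eq_one (hX measurableSet_Ioi)).2 hpos
  have hlog : (fun ω => Int.fract (Real.logb b (a * X ω)))
      =ᵐ[ℙ] fun ω => Int.fract (Real.logb b a + Real.logb b (X ω)) := by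
    filter_upwards [hXpos] with ω hω
    rw [Real.logb_mul ha.ne' hω.ne']
  refine ⟨by simpa only [mul_pos_iff_of_pos_left ha] using hpos, ?_⟩
  rw [Measure.map_congr hlog]
  exact map_fract_const_add_of_map_fract_eq
    ((Real.measurable_log.comp hX).div_const _) hben _

/-- Scale invariance: if `X` is base-`b` Benford and `a > 0`, then `aX` is
also base-`b` Benford. -/
theorem benford_smul
    {Ω : Type*} [MeasurableSpace Ω] (ℙ : Measure Ω) [IsProbabilityMeasure ℙ]
    (b : ℕ) (hb : 2 ≤ b) (X : Ω → ℝ) (hX : Measurable X)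
    (hpos : ℙ {ω | 0 < X ω} = 1)
    (hben : Measure.map (fun ω => Int.fract (Real.logb b (X ω))) ℙ
      = volume.restrict (Set.Ico (0 : ℝ) 1)) :
    ∀ a : ℝ, 0 < a →
      ℙ {ω | 0 < a * X ω} = 1 ∧
      Measure.map (fun ω => Int.fract (Real.logb b (a * X ω))) ℙ
        = volume.restrict (Set.Ico (0 : ℝ) 1) :=
  benford_smul_general ℙ b X hX hpos hben
end

section
/- Let b ≥ 2 and m ≥ 2 be integers and set c := b^m. Then for every real x > 0 there exists a unique integer r with 0 ≤ r ≤ m − 1 such that S_c(x) = S_b(x) · b^r; moreover S_b(S_c(x)) = S_b(x). -/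
/-!
With `L = log_b x` we have `log_{b^m} x = L / m`, and `m ⟨L / m⟩ = ⟨L⟩ + (⌊L⌋ mod m)`, so
`S_{b^m}(x) = b^{m ⟨L/m⟩} = S_b(x) · b^r` with `r = ⌊L⌋ mod m ∈ [0, m)`. Multiplying by an integer
power of `b` does not change the base-`b` significand, whence `S_b(S_{b^m}(x)) = S_b(S_b(x)) = S_b(x)`.
-/

open Real

noncomputable def significand (b x : ℝ) : ℝ := b ^ Int.fract (logb b x)

lemma Real.logb_pow_base (b x : ℝ) (m : ℕ) : logb (b ^ m) x = logb b x / m := by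
  rw [logb, logb, log_pow, div_div, mul_comm]

lemma Int.natCast_mul_fract_div_natCast {k : Type*} [Field k] [LinearOrder k] [IsOrderedRing k]
    [FloorRing k] (a : k) {m : ℕ} (hm : m ≠ 0) :
    m * Int.fract (a / m) = Int.fract a + ((⌊a⌋ % m : ℤ) : k) := by
  have hm' : (m : k) ≠ 0 := Nat.cast_ne_zero.mpr hm
  rw [Int.fract, Int.fract, Int.floor_div_natCast, Int.emod_def]
  push_cast
  field_simp
  ring

section Significand

variable {b : ℝ}

lemma significand_pos (hb : 0 < b) (x : ℝ) : 0 < significand b x :=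
  rpow_pos_of_pos hb _

lemma significand_significand (hb : 1 < b) (x : ℝ) :
    significand b (significand b x) = significand b x := by
  unfold significand
  rw [logb_rpow (by linarith) hb.ne', Int.fract_fract]

lemma significand_mul_zpow_self (hb : 1 < b) {x : ℝ} (hx : 0 < x) (k : ℤ) :
    significand b (x * b ^ k) = significand b x := by
  have hb0 : 0 < b := by linarith
  rw [significand, significand, logb_mul hx.ne' (zpow_pos hb0 k).ne', ← rpow_intCast,
    logb_rpow hb0 hb.ne', Int.fract_add_intCast]

lemma significand_pow_eq_mul_zpow (hb : 0 < b) (x : ℝ) {m : ℕ} (hm : m ≠ 0) :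
    significand (b ^ m) x = significand b x * b ^ (⌊logb b x⌋ % m) := by
  rw [significand, significand, logb_pow_base, ← rpow_natCast_mul hb.le,
    Int.natCast_mul_fract_div_natCast _ hm, rpow_add_intCast hb.ne']

end Significand

/-- For `c = b^m`, every `x > 0` satisfies `S_c(x) = S_b(x) · b^r` for a unique
integer `0 ≤ r ≤ m − 1`, and moreover `S_b(S_c(x)) = S_b(x)`.
Here `S_b x = b ^ ⟨log_b x⟩` is the base-`b` significand. -/
theorem significand_pow_base
    (b m : ℕ) (hb : 2 ≤ b) (hm : 2 ≤ m) :
    ∀ x : ℝ, 0 < x →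
      (∃! r : ℤ, 0 ≤ r ∧ r ≤ (m : ℤ) - 1 ∧
        ((b ^ m : ℕ) : ℝ) ^ Int.fract (Real.logb (b ^ m : ℕ) x)
          = (b : ℝ) ^ Int.fract (Real.logb b x) * (b : ℝ) ^ r) ∧
      (b : ℝ) ^ Int.fract (Real.logb b
          (((b ^ m : ℕ) : ℝ) ^ Int.fract (Real.logb (b ^ m : ℕ) x)))
        = (b : ℝ) ^ Int.fract (Real.logb b x) := by
  intro x _
  have hb1 : (1 : ℝ) < b := by exact_mod_cast hb
  have hm0 : m ≠ 0 := by omega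
  have hS : significand ((b ^ m : ℕ) : ℝ) x = significand b x * (b : ℝ) ^ (⌊logb b x⌋ % m) := by
    rw [Nat.cast_pow]
    exact significand_pow_eq_mul_zpow (by linarith) x hm0
  refine ⟨⟨_, ⟨Int.emod_nonneg _ (by omega), Int.le_sub_one_of_lt (Int.emod_lt_of_pos _ (by omega)),
    hS⟩, fun r ⟨_, _, hr⟩ => ?_⟩, ?_⟩
  · have hpow := mul_left_cancel₀ (significand_pos (by linarith) x).ne' (hr.symm.trans hS)
    exact zpow_right_injective₀ (by linarith) hb1.ne' hpow
  · change significand b (significand ((b ^ m : ℕ) : ℝ) x) = significand b x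
    rw [hS, significand_mul_zpow_self hb1 (significand_pos (by linarith) x),
      significand_significand hb1]
end

section
/- Let b ≥ 2 and c ≥ 2 be integers, and suppose there exist positive integers n and m such that b^n = c^m. Then there exists a probability space and a random variable X on it such that X is both base-b Benford and base-c Benford. -/
/-!
Take `X = (b ^ n) ^ U` with `U` uniform on `[0,1)`. Then `log_b X = n U` and, since `b ^ n = c ^ m`,
`log_c X = m U`. Multiplication by a nonzero integer is a measure-preserving endomorphism of the
circle `ℝ / ℤ`, so the fractional parts of `n U` and `m U` are again uniform on `[0,1)`.
-/

open MeasureTheory Set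

namespace UnitAddCircle

lemma measurePreserving_coe_Ico :
    MeasurePreserving ((↑) : ℝ → UnitAddCircle) (volume.restrict (Ico 0 1)) volume := by
  rw [Measure.restrict_congr_set Ico_ae_eq_Ioc]
  simpa using UnitAddCircle.measurePreserving_mk 0

lemma coe_equivIco_zero_coe (x : ℝ) :
    (AddCircle.equivIco 1 0 (x : UnitAddCircle) : ℝ) = Int.fract x := by
  simp [AddCircle.coe_equivIco_mk_apply]

lemma measurePreserving_coe_equivIco_zero :
    MeasurePreserving (fun y : UnitAddCircle => (AddCircle.equivIco 1 0 y : ℝ)) volume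
      (volume.restrict (Ico 0 1)) := by
  have hmeas : Measurable (fun y : UnitAddCircle => (AddCircle.equivIco 1 0 y : ℝ)) :=
    measurable_subtype_coe.comp (AddCircle.measurableEquivIco 1 0).measurable
  refine ⟨hmeas, ?_⟩
  have hfract : Int.fract =ᵐ[volume.restrict (Ico (0 : ℝ) 1)] id := by
    filter_upwards [ae_restrict_mem measurableSet_Ico] with x hx
    exact Int.fract_eq_self.mpr hx
  rw [← measurePreserving_coe_Ico.map_eq,
    Measure.map_map hmeas measurePreserving_coe_Ico.measurable]
  simp only [Function.comp_def, coe_equivIco_zero_coe]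
  rw [Measure.map_congr hfract, Measure.map_id]

end UnitAddCircle

lemma measurePreserving_fract_intCast_mul {k : ℤ} (hk : k ≠ 0) :
    MeasurePreserving (fun x : ℝ => Int.fract (k * x)) (volume.restrict (Ico 0 1))
      (volume.restrict (Ico 0 1)) := by
  have hcomp : (fun x : ℝ => Int.fract (k * x)) =
      (fun y : UnitAddCircle => (AddCircle.equivIco 1 0 y : ℝ)) ∘ (fun y => k • y) ∘ (↑) := by
    funext x
    rw [Function.comp_apply, Function.comp_apply, ← AddCircle.coe_zsmul, zsmul_eq_mul,
      UnitAddCircle.coe_equivIco_zero_coe]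
  rw [hcomp]
  exact UnitAddCircle.measurePreserving_coe_equivIco_zero.comp
    ((Measure.measurePreserving_zsmul volume hk).comp UnitAddCircle.measurePreserving_coe_Ico)

lemma map_fract_logb_pow_rpow_volume_Ico {b : ℝ} (hb₀ : 0 < b) (hb₁ : b ≠ 1) {n : ℕ}
    (hn : n ≠ 0) :
    Measure.map (fun x : ℝ => Int.fract (Real.logb b ((b ^ n) ^ x)))
      (volume.restrict (Ico (0 : ℝ) 1)) = volume.restrict (Ico (0 : ℝ) 1) := by
  have hlog (x : ℝ) : Real.logb b ((b ^ n) ^ x) = ((n : ℤ) : ℝ) * x := by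
    rw [← Real.rpow_natCast, ← Real.rpow_mul hb₀.le, Real.logb_rpow hb₀ hb₁, Int.cast_natCast]
  simp only [hlog]
  exact (measurePreserving_fract_intCast_mul (Int.natCast_ne_zero.mpr hn)).map_eq

/-- If `b^n = c^m` for some positive integers `n, m`, then there is a random
variable that is simultaneously base-`b` Benford and base-`c` Benford. -/
theorem exists_benford_two_bases_of_common_power
    (b c : ℕ) (hb : 2 ≤ b) (hc : 2 ≤ c)
    (n m : ℕ) (hn : 0 < n) (hm : 0 < m) (hpow : b ^ n = c ^ m) :
    ∃ (Ω : Type) (_ : MeasurableSpace Ω) (ℙ : Measure Ω) (_ : IsProbabilityMeasure ℙ)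
      (X : Ω → ℝ), Measurable X ∧
      ℙ {ω | 0 < X ω} = 1 ∧
      Measure.map (fun ω => Int.fract (Real.logb b (X ω))) ℙ
        = volume.restrict (Set.Ico (0 : ℝ) 1) ∧
      Measure.map (fun ω => Int.fract (Real.logb c (X ω))) ℙ
        = volume.restrict (Set.Ico (0 : ℝ) 1) := by
  have hb₀ : (0 : ℝ) < b := by positivity
  have hc₀ : (0 : ℝ) < c := by positivity
  have hb₁ : (b : ℝ) ≠ 1 := by exact_mod_cast (by omega : b ≠ 1)
  have hc₁ : (c : ℝ) ≠ 1 := by exact_mod_cast (by omega : c ≠ 1)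
  have hbc : (b : ℝ) ^ n = (c : ℝ) ^ m := by exact_mod_cast hpow
  have hvol : volume (Ico (0 : ℝ) 1) = 1 := by simp [Real.volume_Ico]
  refine ⟨ℝ, inferInstance, volume.restrict (Ico 0 1), ⟨by simp [hvol]⟩,
    fun x => ((b : ℝ) ^ n) ^ x, ?_, ?_, ?_, ?_⟩
  · exact (continuous_const.rpow continuous_id fun _ => Or.inl (by positivity)).measurable
  · simp [Real.rpow_pos_of_pos (pow_pos hb₀ n), hvol]
  · exact map_fract_logb_pow_rpow_volume_Ico hb₀ hb₁ hn.ne'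
  · rw [hbc]
    exact map_fract_logb_pow_rpow_volume_Ico hc₀ hc₁ hm.ne'
end

section
/- Define f : ℝ → [0,∞) by f(x) = 2/(3 x ln 4) for x ∈ [1, 4), f(x) = 1/(3 x ln 4) for x ∈ [4, 16), and f(x) = 0 otherwise. Then ∫_ℝ f dx = 1, and any random variable X whose law has density f with respect to Lebesgue measure is base-4 Benford but is not base-16 Benford; indeed P(S_16(X) ≤ 8) = 5/6 while log_16 8 = 3/4. -/
open MeasureTheory

private lemma lint_cdiv {c a b : ℝ} (hc : 0 ≤ c) (ha : 0 < a) (hab : a ≤ b) :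
    ∫⁻ x in Set.Ico a b, ENNReal.ofReal (c / x) = ENNReal.ofReal (c * Real.log (b / a)) := by
  have hb : 0 < b := lt_of_lt_of_le ha hab
  have hcont : ContinuousOn (fun x : ℝ => c / x) (Set.Icc a b) :=
    continuousOn_const.div continuousOn_id (fun x hx => ne_of_gt (lt_of_lt_of_le ha hx.1))
  have hInt : IntegrableOn (fun x : ℝ => c / x) (Set.Ioc a b) volume :=
    (hcont.integrableOn_Icc).mono_set Set.Ioc_subset_Icc_self
  have hnn : 0 ≤ᵐ[volume.restrict (Set.Ioc a b)] fun x : ℝ => c / x :=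
    (ae_restrict_iff' measurableSet_Ioc).mpr
      (Filter.Eventually.of_forall fun x hx => div_nonneg hc (le_of_lt (lt_trans ha hx.1)))
  have hae : Set.Ico a b =ᵐ[volume] Set.Ioc a b := Ioo_ae_eq_Ico.symm.trans Ioo_ae_eq_Ioc
  rw [setLIntegral_congr hae, ← ofReal_integral_eq_lintegral_ofReal hInt hnn]
  congr 1
  rw [← intervalIntegral.integral_of_le hab]
  have hcx : (fun x : ℝ => c / x) = fun x : ℝ => c * x⁻¹ := by funext x; rw [div_eq_mul_inv]
  calc ∫ x in a..b, c / x = ∫ x in a..b, c * x⁻¹ := by rw [hcx]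
    _ = c * ∫ x in a..b, x⁻¹ := intervalIntegral.integral_const_mul _ _
    _ = c * Real.log (b / a) := by rw [integral_inv_of_pos ha hb]

private lemma union_null' {s t : Set ℝ} {μ : Measure ℝ} (ht : μ t = 0) : μ (s ∪ t) = μ s :=
  le_antisymm ((measure_union_le s t).trans (by rw [ht, add_zero]))
    (measure_mono Set.subset_union_left)

/-- Counterexample to the converse of Proposition 8.1: the density
`f(x) = 2/(3 x ln 4)` on `[1,4)`, `f(x) = 1/(3 x ln 4)` on `[4,16)`, `0`
otherwise, integrates to `1`; a random variable with this density is base-4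
Benford but not base-16 Benford: `P(S₁₆(X) ≤ 8) = 5/6` while `log₁₆ 8 = 3/4`. -/
theorem base4_benford_not_base16_benford
    {Ω : Type*} [MeasurableSpace Ω] (ℙ : Measure Ω) [IsProbabilityMeasure ℙ]
    (f : ℝ → ℝ)
    (hfdef : ∀ x : ℝ, f x =
      if 1 ≤ x ∧ x < 4 then 2 / (3 * x * Real.log 4)
      else if 4 ≤ x ∧ x < 16 then 1 / (3 * x * Real.log 4)
      else 0)
    (X : Ω → ℝ) (hX : Measurable X)
    (hlaw : Measure.map X ℙ = volume.withDensity (fun x => ENNReal.ofReal (f x))) :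
    (∫ x, f x) = 1 ∧
    Measure.map (fun ω => Int.fract (Real.logb 4 (X ω))) ℙ
      = volume.restrict (Set.Ico (0 : ℝ) 1) ∧
    Measure.map (fun ω => Int.fract (Real.logb 16 (X ω))) ℙ
      ≠ volume.restrict (Set.Ico (0 : ℝ) 1) ∧
    ℙ {ω | (16 : ℝ) ^ Int.fract (Real.logb 16 (X ω)) ≤ 8} = ENNReal.ofReal (5 / 6) ∧
    Real.logb 16 8 = 3 / 4 := by
  have hlog2 : 0 < Real.log 2 := Real.log_pos one_lt_two
  have hl2 : Real.log 2 ≠ 0 := ne_of_gt hlog2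
  have L4 : Real.log 4 = 2 * Real.log 2 := by
    rw [show (4:ℝ) = 2 ^ (2:ℕ) by norm_num, Real.log_pow]; push_cast; ring
  have hL : 0 < Real.log 4 := by rw [L4]; linarith
  set c1 : ℝ := 2 / (3 * Real.log 4) with hc1
  set c2 : ℝ := 1 / (3 * Real.log 4) with hc2
  have hc1n : 0 ≤ c1 := by positivity
  have hc2n : 0 ≤ c2 := by positivity
  set μ := volume.withDensity (fun x => ENNReal.ofReal (f x)) with hμ
  -- measurability of f
  have hfm : Measurable f := by
    have hrepr : f = fun x => Set.indicator (Set.Ico (1:ℝ) 4) (fun x => 2 / (3 * x * Real.log 4)) x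
        + Set.indicator (Set.Ico (4:ℝ) 16) (fun x => 1 / (3 * x * Real.log 4)) x := by
      funext x
      rw [hfdef x]
      by_cases h1 : 1 ≤ x ∧ x < 4
      · rw [if_pos h1, Set.indicator_of_mem (Set.mem_Ico.mpr h1),
          Set.indicator_of_notMem (by
            simp only [Set.mem_Ico, not_and]; intro h4; linarith [h1.2]), add_zero]
      · rw [if_neg h1, Set.indicator_of_notMem (by simp only [Set.mem_Ico]; exact h1)]
        by_cases h2 : 4 ≤ x ∧ x < 16
        · rw [if_pos h2, Set.indicator_of_mem (Set.mem_Ico.mpr h2), zero_add]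
        · rw [if_neg h2, Set.indicator_of_notMem (by simp only [Set.mem_Ico]; exact h2), add_zero]
    rw [hrepr]
    have m1 : Measurable fun x : ℝ => 2 / (3 * x * Real.log 4) :=
      measurable_const.div ((measurable_const.mul measurable_id).mul measurable_const)
    have m2 : Measurable fun x : ℝ => 1 / (3 * x * Real.log 4) :=
      measurable_const.div ((measurable_const.mul measurable_id).mul measurable_const)
    exact (m1.indicator measurableSet_Ico).add (m2.indicator measurableSet_Ico)
  have hf_nonneg : ∀ x, 0 ≤ f x := by
    intro x
    rw [hfdef x]
    split_ifs with h1 h2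
    · have hx : (0:ℝ) < x := lt_of_lt_of_le one_pos h1.1
      positivity
    · have hx : (0:ℝ) < x := lt_of_lt_of_le (by norm_num) h2.1
      positivity
    · exact le_rfl
  -- singletons are null
  have hac : μ ≪ volume := withDensity_absolutelyContinuous _ _
  have hsing : ∀ y : ℝ, μ {y} = 0 := fun y => hac Real.volume_singleton
  have hIccIco : ∀ p q : ℝ, p ≤ q → μ (Set.Icc p q) = μ (Set.Ico p q) := by
    intro p q h
    rw [← Set.Ico_union_right h, union_null' (hsing q)]
  -- μ of intervals inside the branches
  have key1 : ∀ p q : ℝ, 1 ≤ p → p ≤ q → q ≤ 4 →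
      μ (Set.Ico p q) = ENNReal.ofReal (c1 * Real.log (q / p)) := by
    intro p q hp hpq hq
    have hp0 : (0:ℝ) < p := lt_of_lt_of_le one_pos hp
    have hfun : ∀ x ∈ Set.Ico p q, ENNReal.ofReal (f x) = ENNReal.ofReal (c1 / x) := by
      intro x hx
      rw [hfdef x, if_pos ⟨le_trans hp hx.1, lt_of_lt_of_le hx.2 hq⟩]
      congr 1
      rw [hc1, div_div]
      ring_nf
    rw [hμ, withDensity_apply _ measurableSet_Ico,
      setLIntegral_congr_fun measurableSet_Ico hfun,
      lint_cdiv hc1n hp0 hpq]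
  have key2 : ∀ p q : ℝ, 4 ≤ p → p ≤ q → q ≤ 16 →
      μ (Set.Ico p q) = ENNReal.ofReal (c2 * Real.log (q / p)) := by
    intro p q hp hpq hq
    have hp0 : (0:ℝ) < p := lt_of_lt_of_le (by norm_num) hp
    have hfun : ∀ x ∈ Set.Ico p q, ENNReal.ofReal (f x) = ENNReal.ofReal (c2 / x) := by
      intro x hx
      have hx4 : (4:ℝ) ≤ x := le_trans hp hx.1
      rw [hfdef x, if_neg (by rintro ⟨-, h⟩; linarith), if_pos ⟨hx4, lt_of_lt_of_le hx.2 hq⟩]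
      congr 1
      rw [hc2, div_div]
      ring_nf
    rw [hμ, withDensity_apply _ measurableSet_Ico,
      setLIntegral_congr_fun measurableSet_Ico hfun,
      lint_cdiv hc2n hp0 hpq]
  -- support
  have hsupp : ∀ t : Set ℝ, MeasurableSet t → μ t = μ (t ∩ Set.Ico 1 16) := by
    intro t ht
    have hfun : ∀ x ∈ t \ Set.Ico (1:ℝ) 16, ENNReal.ofReal (f x) = (fun _ : ℝ => (0 : ENNReal)) x := by
      intro x hx
      have hx' : ¬ (1 ≤ x ∧ x < 16) := by simpa [Set.mem_Ico] using hx.2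
      have hn1 : ¬ (1 ≤ x ∧ x < 4) := by rintro ⟨h1, h4⟩; exact hx' ⟨h1, by linarith⟩
      have hn2 : ¬ (4 ≤ x ∧ x < 16) := by rintro ⟨h4, h16⟩; exact hx' ⟨by linarith, h16⟩
      rw [hfdef x, if_neg hn1, if_neg hn2]
      simp
    have h0 : μ (t \ Set.Ico 1 16) = 0 := by
      rw [hμ, withDensity_apply _ (ht.diff measurableSet_Ico),
        setLIntegral_congr_fun (ht.diff measurableSet_Ico) hfun,
        lintegral_zero]
    rw [← measure_inter_add_diff t measurableSet_Ico, h0, add_zero]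
  -- total mass
  have hμuniv : μ Set.univ = 1 := by
    rw [← hlaw, Measure.map_apply hX MeasurableSet.univ, Set.preimage_univ, measure_univ]
  -- part 1
  have part1 : (∫ x, f x) = 1 := by
    rw [integral_eq_lintegral_of_nonneg_ae (Filter.Eventually.of_forall hf_nonneg)
      hfm.aestronglyMeasurable]
    have h1 : ∫⁻ x, ENNReal.ofReal (f x) = 1 := by
      have h := hμuniv
      rwa [hμ, withDensity_apply _ MeasurableSet.univ, Measure.restrict_univ] at h
    rw [h1]; simp
  -- measurability of fract ∘ logb
  have hlb : ∀ b : ℝ, Measurable fun x : ℝ => Real.logb b x := by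
    intro b; unfold Real.logb; exact Real.measurable_log.div_const _
  have hg4 : Measurable fun x : ℝ => Int.fract (Real.logb 4 x) := measurable_fract.comp (hlb 4)
  have hg16 : Measurable fun x : ℝ => Int.fract (Real.logb 16 x) := measurable_fract.comp (hlb 16)
  have hg4X : Measurable fun ω => Int.fract (Real.logb 4 (X ω)) := hg4.comp hX
  have hg16X : Measurable fun ω => Int.fract (Real.logb 16 (X ω)) := hg16.comp hX
  have h14 : (1:ℝ) < 4 := by norm_num
  -- base-4 preimage description
  have hpre4 : ∀ a : ℝ, 0 ≤ a → a < 1 →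
      ((fun x : ℝ => Int.fract (Real.logb 4 x)) ⁻¹' Set.Iic a) ∩ Set.Ico 1 16
        = Set.Icc 1 ((4:ℝ) ^ a) ∪ Set.Icc 4 (4 * (4:ℝ) ^ a) := by
    intro a ha0 ha1
    have h4a1 : (1:ℝ) ≤ (4:ℝ) ^ a := by
      have h := (Real.rpow_le_rpow_left_iff h14).mpr ha0
      rwa [Real.rpow_zero] at h
    have h4a4 : (4:ℝ) ^ a < 4 := by
      have h := (Real.rpow_lt_rpow_left_iff h14).mpr ha1
      rwa [Real.rpow_one] at h
    ext x
    simp only [Set.mem_inter_iff, Set.mem_preimage, Set.mem_Iic, Set.mem_Ico, Set.mem_union,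
      Set.mem_Icc]
    constructor
    · rintro ⟨hfr, hx1, hx16⟩
      have hx0 : (0:ℝ) < x := by linarith
      by_cases hx4 : x < 4
      · left
        have h0 : 0 ≤ Real.logb 4 x := Real.logb_nonneg h14 hx1
        have h1 : Real.logb 4 x < 1 := by
          rw [Real.logb_lt_iff_lt_rpow h14 hx0, Real.rpow_one]; exact hx4
        rw [Int.fract_eq_self.mpr ⟨h0, h1⟩] at hfr
        exact ⟨hx1, (Real.logb_le_iff_le_rpow h14 hx0).mp hfr⟩
      · right
        push_neg at hx4
        have h1 : 1 ≤ Real.logb 4 x := by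
          rw [Real.le_logb_iff_rpow_le h14 hx0, Real.rpow_one]; exact hx4
        have h2 : Real.logb 4 x < 2 := by
          rw [Real.logb_lt_iff_lt_rpow h14 hx0,
            show ((4:ℝ) ^ (2:ℝ)) = 16 by
              rw [show (2:ℝ) = ((2:ℕ):ℝ) by norm_num, Real.rpow_natCast]; norm_num]
          exact hx16
        have hfract : Int.fract (Real.logb 4 x) = Real.logb 4 x - 1 := by
          rw [← Int.fract_sub_intCast (Real.logb 4 x) 1,
            Int.fract_eq_self.mpr (by push_cast; constructor <;> linarith)]
          push_cast; ring
        rw [hfract] at hfr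
        have hxle : x ≤ (4:ℝ) ^ (1 + a) :=
          (Real.logb_le_iff_le_rpow h14 hx0).mp (by linarith)
        rw [Real.rpow_add (by norm_num : (0:ℝ) < 4), Real.rpow_one] at hxle
        exact ⟨hx4, hxle⟩
    · rintro (⟨h1, h2⟩ | ⟨h1, h2⟩)
      · have hx0 : (0:ℝ) < x := by linarith
        have hlogle : Real.logb 4 x ≤ a := (Real.logb_le_iff_le_rpow h14 hx0).mpr h2
        have h0 : 0 ≤ Real.logb 4 x := Real.logb_nonneg h14 h1
        refine ⟨?_, h1, by linarith⟩
        rw [Int.fract_eq_self.mpr ⟨h0, by linarith⟩]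
        exact hlogle
      · have hx0 : (0:ℝ) < x := by linarith
        have hxle : x ≤ (4:ℝ) ^ (1 + a) := by
          rw [Real.rpow_add (by norm_num : (0:ℝ) < 4), Real.rpow_one]; exact h2
        have hlogle : Real.logb 4 x ≤ 1 + a := (Real.logb_le_iff_le_rpow h14 hx0).mpr hxle
        have hge : 1 ≤ Real.logb 4 x := by
          rw [Real.le_logb_iff_rpow_le h14 hx0, Real.rpow_one]; exact h1
        have hfract : Int.fract (Real.logb 4 x) = Real.logb 4 x - 1 := by
          rw [← Int.fract_sub_intCast (Real.logb 4 x) 1,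
            Int.fract_eq_self.mpr (by push_cast; constructor <;> linarith)]
          push_cast; ring
        refine ⟨?_, by linarith, by linarith [h4a4]⟩
        rw [hfract]; linarith
  -- part 2 : base-4 Benford
  haveI hPM4 : IsProbabilityMeasure (Measure.map (fun ω => Int.fract (Real.logb 4 (X ω))) ℙ) :=
    Measure.isProbabilityMeasure_map hg4X.aemeasurable
  have hcomp4 : Measure.map (fun ω => Int.fract (Real.logb 4 (X ω))) ℙ
      = Measure.map (fun x => Int.fract (Real.logb 4 x)) μ := by
    rw [← hlaw, Measure.map_map hg4 hX]; rfl
  have part2 : Measure.map (fun ω => Int.fract (Real.logb 4 (X ω))) ℙ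
      = volume.restrict (Set.Ico (0:ℝ) 1) := by
    apply Measure.ext_of_Iic
    intro a
    rw [hcomp4, Measure.map_apply hg4 measurableSet_Iic,
      Measure.restrict_apply measurableSet_Iic]
    rcases lt_or_ge a 0 with ha | ha0
    · have he : (fun x : ℝ => Int.fract (Real.logb 4 x)) ⁻¹' Set.Iic a = ∅ := by
        ext x
        simp only [Set.mem_preimage, Set.mem_Iic, Set.mem_empty_iff_false, iff_false, not_le]
        linarith [Int.fract_nonneg (Real.logb 4 x)]
      have he2 : Set.Iic a ∩ Set.Ico (0:ℝ) 1 = ∅ := by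
        ext x
        simp only [Set.mem_inter_iff, Set.mem_Iic, Set.mem_Ico, Set.mem_empty_iff_false,
          iff_false, not_and]
        intro h1 h2; linarith
      rw [he, he2]; simp
    rcases lt_or_ge a 1 with ha1 | ha1
    · rw [hsupp _ (hg4 measurableSet_Iic), hpre4 a ha0 ha1]
      have h4a1 : (1:ℝ) ≤ (4:ℝ) ^ a := by
        have h := (Real.rpow_le_rpow_left_iff h14).mpr ha0
        rwa [Real.rpow_zero] at h
      have h4a4 : (4:ℝ) ^ a < 4 := by
        have h := (Real.rpow_lt_rpow_left_iff h14).mpr ha1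
        rwa [Real.rpow_one] at h
      have hdisj : Disjoint (Set.Icc (1:ℝ) ((4:ℝ)^a)) (Set.Icc 4 (4*(4:ℝ)^a)) := by
        rw [Set.disjoint_left]
        intro x hx1 hx2
        have := hx1.2
        have := hx2.1
        simp only [Set.mem_Icc] at hx1 hx2
        linarith [hx1.2, hx2.1]
      rw [measure_union hdisj measurableSet_Icc,
        hIccIco _ _ h4a1, hIccIco _ _ (by linarith : (4:ℝ) ≤ 4*(4:ℝ)^a),
        key1 1 _ le_rfl h4a1 (le_of_lt h4a4),
        key2 4 _ le_rfl (by linarith) (by linarith)]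
      rw [div_one, show (4:ℝ)*(4:ℝ)^a/4 = (4:ℝ)^a by ring]
      simp only [Real.log_rpow (show (0:ℝ) < 4 by norm_num)]
      rw [← ENNReal.ofReal_add (mul_nonneg hc1n (mul_nonneg ha0 hL.le))
        (mul_nonneg hc2n (mul_nonneg ha0 hL.le))]
      have harith : c1 * (a * Real.log 4) + c2 * (a * Real.log 4) = a := by
        rw [hc1, hc2]
        field_simp
        ring
      rw [harith]
      have hiic : Set.Iic a ∩ Set.Ico (0:ℝ) 1 = Set.Icc 0 a := by
        ext x
        simp only [Set.mem_inter_iff, Set.mem_Iic, Set.mem_Ico, Set.mem_Icc]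
        constructor
        · rintro ⟨h1, h2, h3⟩; exact ⟨h2, h1⟩
        · rintro ⟨h1, h2⟩; exact ⟨h2, h1, by linarith⟩
      rw [hiic, Real.volume_Icc, sub_zero]
    · have he : (fun x : ℝ => Int.fract (Real.logb 4 x)) ⁻¹' Set.Iic a = Set.univ := by
        ext x
        simp only [Set.mem_preimage, Set.mem_Iic, Set.mem_univ, iff_true]
        linarith [Int.fract_lt_one (Real.logb 4 x)]
      have he2 : Set.Iic a ∩ Set.Ico (0:ℝ) 1 = Set.Ico 0 1 := by
        apply Set.inter_eq_right.mpr
        intro x hx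
        exact le_trans (le_of_lt hx.2) ha1
      rw [he, hμuniv, he2, Real.volume_Ico]
      norm_num
  -- base-16 facts
  have h8 : ((16:ℝ) ^ ((3:ℝ)/4)) = 8 := by
    rw [show (16:ℝ) = 2 ^ (4:ℕ) by norm_num, ← Real.rpow_natCast 2 4,
      ← Real.rpow_mul (by norm_num : (0:ℝ) ≤ 2),
      show ((4:ℕ):ℝ) * (3/4) = ((3:ℕ):ℝ) by push_cast; ring, Real.rpow_natCast]
    norm_num
  have hset : {ω | (16:ℝ) ^ Int.fract (Real.logb 16 (X ω)) ≤ 8}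
      = (fun ω => Int.fract (Real.logb 16 (X ω))) ⁻¹' Set.Iic (3/4 : ℝ) := by
    ext ω
    simp only [Set.mem_setOf_eq, Set.mem_preimage, Set.mem_Iic]
    rw [← h8, Real.rpow_le_rpow_left_iff (by norm_num : (1:ℝ) < 16)]
  have h116 : (1:ℝ) < 16 := by norm_num
  have hpre16 : ((fun x : ℝ => Int.fract (Real.logb 16 x)) ⁻¹' Set.Iic (3/4:ℝ)) ∩ Set.Ico 1 16
      = Set.Icc 1 8 := by
    ext x
    simp only [Set.mem_inter_iff, Set.mem_preimage, Set.mem_Iic, Set.mem_Ico, Set.mem_Icc]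
    constructor
    · rintro ⟨hfr, hx1, hx16⟩
      have hx0 : (0:ℝ) < x := by linarith
      have h0 : 0 ≤ Real.logb 16 x := Real.logb_nonneg h116 hx1
      have h1 : Real.logb 16 x < 1 := by
        rw [Real.logb_lt_iff_lt_rpow h116 hx0, Real.rpow_one]; exact hx16
      rw [Int.fract_eq_self.mpr ⟨h0, h1⟩] at hfr
      have hxle := (Real.logb_le_iff_le_rpow h116 hx0).mp hfr
      rw [h8] at hxle
      exact ⟨hx1, hxle⟩
    · rintro ⟨h1, h2⟩
      have hx0 : (0:ℝ) < x := by linarith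
      have h0 : 0 ≤ Real.logb 16 x := Real.logb_nonneg h116 h1
      have hle : Real.logb 16 x ≤ 3/4 :=
        (Real.logb_le_iff_le_rpow h116 hx0).mpr (by rw [h8]; exact h2)
      refine ⟨?_, h1, by linarith⟩
      rw [Int.fract_eq_self.mpr ⟨h0, by linarith⟩]
      exact hle
  -- part 4
  have hPμ : ℙ ((fun ω => Int.fract (Real.logb 16 (X ω))) ⁻¹' Set.Iic (3/4:ℝ))
      = μ ((fun x : ℝ => Int.fract (Real.logb 16 x)) ⁻¹' Set.Iic (3/4:ℝ)) := by
    rw [← hlaw, Measure.map_apply hX (hg16 measurableSet_Iic)]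
    rfl
  have hdisj48 : Disjoint (Set.Ico (1:ℝ) 4) (Set.Ico (4:ℝ) 8) := by
    rw [Set.disjoint_left]
    intro x hx1 hx2
    simp only [Set.mem_Ico] at hx1 hx2
    linarith [hx1.2, hx2.1]
  have part4 : ℙ {ω | (16:ℝ) ^ Int.fract (Real.logb 16 (X ω)) ≤ 8} = ENNReal.ofReal (5/6) := by
    rw [hset, hPμ, hsupp _ (hg16 measurableSet_Iic), hpre16,
      hIccIco _ _ (by norm_num : (1:ℝ) ≤ 8),
      show Set.Ico (1:ℝ) 8 = Set.Ico 1 4 ∪ Set.Ico 4 8 from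
        (Set.Ico_union_Ico_eq_Ico (by norm_num) (by norm_num)).symm,
      measure_union hdisj48 measurableSet_Ico,
      key1 1 4 le_rfl (by norm_num) le_rfl,
      key2 4 8 le_rfl (by norm_num) (by norm_num)]
    rw [div_one, show (8:ℝ)/4 = 2 by norm_num,
      ← ENNReal.ofReal_add (mul_nonneg hc1n hL.le) (mul_nonneg hc2n hlog2.le)]
    congr 1
    rw [hc1, hc2, L4]
    field_simp
    ring
  -- part 5
  have part5 : Real.logb 16 8 = 3/4 := by
    rw [Real.logb, show (8:ℝ) = 2 ^ (3:ℕ) by norm_num, show (16:ℝ) = 2 ^ (4:ℕ) by norm_num,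
      Real.log_pow, Real.log_pow]
    push_cast
    field_simp
  -- part 3
  have part3 : Measure.map (fun ω => Int.fract (Real.logb 16 (X ω))) ℙ
      ≠ volume.restrict (Set.Ico (0:ℝ) 1) := by
    intro h
    have hP : ℙ {ω | (16:ℝ) ^ Int.fract (Real.logb 16 (X ω)) ≤ 8} = ENNReal.ofReal (3/4) := by
      rw [hset, ← Measure.map_apply hg16X measurableSet_Iic, h,
        Measure.restrict_apply measurableSet_Iic]
      have hiic : Set.Iic (3/4:ℝ) ∩ Set.Ico 0 1 = Set.Icc 0 (3/4) := by
        ext x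
        simp only [Set.mem_inter_iff, Set.mem_Iic, Set.mem_Ico, Set.mem_Icc]
        constructor
        · rintro ⟨h1, h2, h3⟩; exact ⟨h2, h1⟩
        · rintro ⟨h1, h2⟩; exact ⟨h2, h1, by linarith⟩
      rw [hiic, Real.volume_Icc, sub_zero]
    rw [part4] at hP
    have hcontra := (ENNReal.ofReal_eq_ofReal_iff (by norm_num) (by norm_num)).mp hP
    norm_num at hcontra
  exact ⟨part1, part2, part3, part4, part5⟩
end
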